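/- arXiv:2407.14079 — 10 statements merged into one kernel-verified Lean document; each statement's English description precedes it below -/
import Mathlib

section
/- Let T > 0 and α > 0 satisfy αT < 1. Let y : [0,∞) → ℝ be continuous and satisfy y(t) ≤ α ∫_{t−T}^{t} y(s) ds for every t ≥ T. Then there exists κ > 0 such that, setting C = sup_{t ∈ [0,T]} |y(t)| e^{κ t}, one has y(t) ≤ C e^{−κ t} for every t ≥ 0. -/
open MeasureTheory Set Filter Topology Real

/-!
For small `κ > 0` the exponential `M e^{-κt}` is a strict supersolution of the delayed
inequality, because `α (e^{κT} - 1) / κ → α T < 1` as `κ → 0⁺`. A continuous subsolution lying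
strictly below a continuous strict supersolution on the initial window `[0, T]` stays below it
forever: at the first crossing time `t₀` the subsolution is below on `[t₀ - T, t₀)`, so the
integral inequalities force it to be strictly below at `t₀` as well. Taking
`M > sup_{[0,T]} |y| e^{κt}` arbitrary gives the bound.
-/

theorem exists_pos_mul_exp_sub_one_lt {T α : ℝ} (hαT : α * T < 1) :
    ∃ κ > 0, α * (exp (κ * T) - 1) < κ := by
  set f : ℝ → ℝ := fun κ => α * (exp (κ * T) - 1)
  have hf : HasDerivAt f (α * T) 0 := by
    simpa using (((hasDerivAt_mul_const T).exp).sub_const 1).const_mul α (x := 0)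
  have h_slope : ∀ᶠ κ in 𝓝[>] 0, slope f 0 κ < 1 :=
    hf.hasDerivWithinAt.limsup_slope_le' (by simp) hαT
  obtain ⟨κ, hκ_slope, hκ⟩ := (h_slope.and self_mem_nhdsWithin).exists
  refine ⟨κ, hκ, ?_⟩
  simpa [slope_def_field, f, div_lt_one hκ] using hκ_slope

theorem integral_exp_neg_mul {κ : ℝ} (hκ : κ ≠ 0) (a b : ℝ) :
    ∫ s in a..b, exp (-κ * s) = (exp (-κ * a) - exp (-κ * b)) / κ := by
  rw [intervalIntegral.integral_comp_mul_left (fun s => exp s) (neg_ne_zero.mpr hκ), integral_exp,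
    smul_eq_mul, inv_neg, neg_mul, ← mul_neg, neg_sub, inv_mul_eq_div]

theorem mul_integral_exp_neg_mul_lt {T α κ M : ℝ} (hκ : 0 < κ) (hM : 0 < M)
    (hκα : α * (exp (κ * T) - 1) < κ) (t : ℝ) :
    α * ∫ s in (t - T)..t, M * exp (-κ * s) < M * exp (-κ * t) := by
  have h_eq : α * ∫ s in (t - T)..t, M * exp (-κ * s)
      = M * exp (-κ * t) * (α * (exp (κ * T) - 1) / κ) := by
    rw [intervalIntegral.integral_const_mul, integral_exp_neg_mul hκ.ne',
      show -κ * (t - T) = -κ * t + κ * T by ring, exp_add]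
    ring
  rw [h_eq]
  exact mul_lt_of_lt_one_right (by positivity) ((div_lt_one hκ).mpr hκα)

theorem lt_of_le_mul_integral_delay {T α : ℝ} {y g : ℝ → ℝ} (hT : 0 ≤ T) (hα : 0 ≤ α)
    (hy : ContinuousOn y (Ici 0)) (hg : ContinuousOn g (Ici 0))
    (h_init : ∀ t ∈ Icc 0 T, y t < g t)
    (hy_delay : ∀ t, T ≤ t → y t ≤ α * ∫ s in (t - T)..t, y s)
    (hg_delay : ∀ t, T ≤ t → α * ∫ s in (t - T)..t, g s < g t) :
    ∀ t, 0 ≤ t → y t < g t := by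
  by_contra! h
  obtain ⟨t₁, ht₁, hgy₁⟩ := h
  set S := {t ∈ Ici 0 | g t ≤ y t}
  have hS_bdd : BddBelow S := ⟨0, fun _ ht => ht.1⟩
  set t₀ := sInf S
  obtain ⟨ht₀, hgy₀⟩ : t₀ ∈ S :=
    (isClosed_Ici.isClosed_le hg hy).csInf_mem ⟨t₁, ht₁, hgy₁⟩ hS_bdd
  have h_before : ∀ s, 0 ≤ s → s < t₀ → y s < g s := fun s hs hst =>
    lt_of_not_ge fun h => (csInf_le hS_bdd ⟨hs, h⟩).not_gt hst
  have hTt₀ : T < t₀ := lt_of_not_ge fun h => (h_init t₀ ⟨ht₀, h⟩).not_ge hgy₀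
  have h_window : uIcc (t₀ - T) t₀ ⊆ Ici 0 := by
    rw [uIcc_of_le (by linarith)]
    exact Icc_subset_Ici_self.trans (Ici_subset_Ici.mpr (by linarith))
  have h_int : ∫ s in (t₀ - T)..t₀, y s ≤ ∫ s in (t₀ - T)..t₀, g s :=
    intervalIntegral.integral_mono_on_of_le_Ioo (by linarith)
      ((hy.mono h_window).intervalIntegrable) ((hg.mono h_window).intervalIntegrable)
      fun s hs => (h_before s (by linarith [hs.1]) hs.2).le
  exact lt_irrefl _ <| calc
    g t₀ ≤ y t₀ := hgy₀
    _ ≤ α * ∫ s in (t₀ - T)..t₀, y s := hy_delay t₀ hTt₀.le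
    _ ≤ α * ∫ s in (t₀ - T)..t₀, g s := by gcongr
    _ < g t₀ := hg_delay t₀ hTt₀.le

/-- Delayed Grönwall lemma: if `y` is continuous on `[0,∞)` and satisfies
`y t ≤ α ∫_{t-T}^t y` for `t ≥ T`, with `α T < 1`, then `y` decays exponentially,
with constant `C = sup_{t ∈ [0,T]} |y t| e^{κ t}`. -/
theorem delayed_gronwall (T α : ℝ) (hT : 0 < T) (hα : 0 < α) (hαT : α * T < 1)
    (y : ℝ → ℝ) (hy : ContinuousOn y (Ici 0))
    (hineq : ∀ t, T ≤ t → y t ≤ α * ∫ s in (t - T)..t, y s) :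
    ∃ κ > 0, ∀ t, 0 ≤ t →
      y t ≤ sSup ((fun s => |y s| * Real.exp (κ * s)) '' Icc 0 T) * Real.exp (-κ * t) := by
  obtain ⟨κ, hκ, hκα⟩ := exists_pos_mul_exp_sub_one_lt hαT
  refine ⟨κ, hκ, fun t ht => ?_⟩
  set C := sSup ((fun s => |y s| * exp (κ * s)) '' Icc 0 T)
  have hC : ∀ s ∈ Icc 0 T, |y s| * exp (κ * s) ≤ C := fun s hs =>
    le_csSup (isCompact_Icc.bddAbove_image
      ((hy.mono Icc_subset_Ici_self).abs.mul (by fun_prop))) (mem_image_of_mem _ hs)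
  have hC₀ : 0 ≤ C :=
    (mul_nonneg (abs_nonneg _) (exp_pos _).le).trans (hC 0 ⟨le_rfl, hT.le⟩)
  rw [← div_le_iff₀ (exp_pos _)]
  refine le_of_forall_gt_imp_ge_of_dense fun M hM => ?_
  rw [div_le_iff₀ (exp_pos _)]
  refine (lt_of_le_mul_integral_delay hT.le hα.le hy (by fun_prop) (fun s hs => ?_) hineq
    (fun s _ => mul_integral_exp_neg_mul_lt hκ (hC₀.trans_lt hM) hκα s) t ht).le
  calc y s ≤ |y s| * exp (κ * s) * exp (-κ * s) := by
        rw [mul_assoc, ← exp_add, neg_mul, add_neg_cancel, exp_zero, mul_one]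
        exact le_abs_self _
    _ ≤ C * exp (-κ * s) := by gcongr; exact hC s hs
    _ < M * exp (-κ * s) := by gcongr
end

section
/- Let T > 0 and α > 0. Let y : [0,∞) → ℝ be continuous and satisfy y(t) ≤ α ∫_{t−T}^{t} y(s) ds for every t ≥ T. If y(t) ≤ 0 for every t ∈ [0,T], then y(t) ≤ 0 for every t ≥ 0. -/
/-!
Let `t₀ ≥ T` be a time up to which `y ≤ 0`, and choose `δ ≤ T` with `α δ < 1`. At a maximum
point `s` of `y` on `[t₀, t₀ + δ]` the window `[s - T, s]` reaches back only into the region where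
`y ≤ 0` and into `[t₀, s]`, so `y s ≤ α (s - t₀) y s ≤ α δ y s`, forcing `y s ≤ 0`. Hence the
sign is propagated in steps of fixed length `δ`, which exhaust `[0, ∞)`.
-/

open MeasureTheory Set

theorem Ici_subset_of_Icc_subset_of_step {S : Set ℝ} {c a δ : ℝ} (hδ : 0 < δ)
    (hinit : Icc c a ⊆ S) (hstep : ∀ b, a ≤ b → Icc c b ⊆ S → Icc b (b + δ) ⊆ S) :
    Ici c ⊆ S := by
  have hreach : ∀ n : ℕ, Icc c (a + n * δ) ⊆ S := by
    intro n
    induction n with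
    | zero => simpa using hinit
    | succ n ih =>
      have hb : a ≤ a + n * δ := le_add_of_nonneg_right (by positivity)
      calc Icc c (a + (n + 1 : ℕ) * δ)
          ⊆ Icc c (a + n * δ) ∪ Icc (a + n * δ) (a + n * δ + δ) := by
            push_cast; rw [add_one_mul, ← add_assoc]; exact Icc_subset_Icc_union_Icc
        _ ⊆ S := union_subset ih (hstep _ hb ih)
  intro t ht
  obtain ⟨n, hn⟩ := exists_nat_ge ((t - a) / δ)
  refine hreach n ⟨ht, ?_⟩
  linarith [(div_le_iff₀ hδ).1 hn]

theorem integral_le_sub_mul_of_nonpos_of_le {y : ℝ → ℝ} {a b s M : ℝ} (hab : a ≤ b)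
    (hbs : b ≤ s) (hy : ContinuousOn y (Icc a s)) (hnonpos : ∀ u ∈ Icc a b, y u ≤ 0)
    (hM : ∀ u ∈ Icc b s, y u ≤ M) :
    ∫ u in a..s, y u ≤ (s - b) * M := by
  have hint : ∀ c ∈ Icc a s, ∀ d ∈ Icc a s, IntervalIntegrable y volume c d :=
    fun c hc d hd => (hy.mono (uIcc_subset_Icc hc hd)).intervalIntegrable
  have hb : b ∈ Icc a s := ⟨hab, hbs⟩
  have ha : a ∈ Icc a s := ⟨le_rfl, hab.trans hbs⟩
  have hs : s ∈ Icc a s := ⟨hab.trans hbs, le_rfl⟩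
  rw [← intervalIntegral.integral_add_adjacent_intervals (hint a ha b hb) (hint b hb s hs)]
  have hleft : ∫ u in a..b, y u ≤ ∫ _ in a..b, (0 : ℝ) :=
    intervalIntegral.integral_mono_on hab (hint a ha b hb) intervalIntegrable_const hnonpos
  have hright : ∫ u in b..s, y u ≤ ∫ _ in b..s, M :=
    intervalIntegral.integral_mono_on hbs (hint b hb s hs) intervalIntegrable_const hM
  simp only [intervalIntegral.integral_const, smul_eq_mul, mul_zero] at hleft hright
  linarith

theorem nonpos_on_Icc_add_of_le_delayed_integral {y : ℝ → ℝ} {T α t₀ δ : ℝ} (hα : 0 ≤ α)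
    (hδ : 0 ≤ δ) (hδT : δ ≤ T) (hαδ : α * δ < 1) (hy : ContinuousOn y (Icc (t₀ - T) (t₀ + δ)))
    (hineq : ∀ t ∈ Icc t₀ (t₀ + δ), y t ≤ α * ∫ s in (t - T)..t, y s)
    (hpast : ∀ t ∈ Icc (t₀ - T) t₀, y t ≤ 0) :
    ∀ t ∈ Icc t₀ (t₀ + δ), y t ≤ 0 := by
  have hT : 0 ≤ T := hδ.trans hδT
  obtain ⟨s, hs, hmax⟩ := isCompact_Icc.exists_isMaxOn (nonempty_Icc.2 (by linarith))
    (hy.mono (Icc_subset_Icc_left (by linarith)))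
  suffices y s ≤ 0 from fun t ht => (hmax ht).trans this
  have hwindow : ∫ u in (s - T)..s, y u ≤ (s - t₀) * y s :=
    integral_le_sub_mul_of_nonpos_of_le (by linarith [hs.2]) hs.1
      (hy.mono (Icc_subset_Icc (by linarith [hs.1]) hs.2))
      (fun u hu => hpast u ⟨by linarith [hu.1, hs.1], hu.2⟩)
      (fun u hu => hmax ⟨hu.1, hu.2.trans hs.2⟩)
  have hself : y s ≤ α * (s - t₀) * y s := by
    rw [mul_assoc]
    exact (hineq s hs).trans (mul_le_mul_of_nonneg_left hwindow hα)
  have hcontract : α * (s - t₀) < 1 :=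
    (mul_le_mul_of_nonneg_left (by linarith [hs.2]) hα).trans_lt hαδ
  nlinarith

/-- Sign propagation for the delayed integral inequality: if `y` is continuous on `[0,∞)`,
satisfies `y t ≤ α ∫_{t-T}^t y` for `t ≥ T`, and is nonpositive on `[0,T]`,
then it is nonpositive on all of `[0,∞)`. -/
theorem delayed_gronwall_sign (T α : ℝ) (hT : 0 < T) (hα : 0 < α)
    (y : ℝ → ℝ) (hy : ContinuousOn y (Ici 0))
    (hineq : ∀ t, T ≤ t → y t ≤ α * ∫ s in (t - T)..t, y s)
    (hinit : ∀ t ∈ Icc (0:ℝ) T, y t ≤ 0) :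
    ∀ t, 0 ≤ t → y t ≤ 0 := by
  set δ := min T (1 / (2 * α))
  have hδ : 0 < δ := lt_min hT (by positivity)
  have hαδ : α * δ < 1 :=
    calc α * δ ≤ α * (1 / (2 * α)) := mul_le_mul_of_nonneg_left (min_le_right _ _) hα.le
      _ < 1 := by field_simp; norm_num
  refine fun t ht => Ici_subset_of_Icc_subset_of_step (S := {t | y t ≤ 0}) hδ hinit ?_ ht
  intro b hTb hb
  exact nonpos_on_Icc_add_of_le_delayed_integral hα.le hδ.le (min_le_left _ _) hαδ
    (hy.mono fun u hu => mem_Ici.2 (by linarith [hu.1]))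
    (fun t ht => hineq t (hTb.trans ht.1))
    (fun u hu => hb ⟨by linarith [hu.1], hu.2⟩)
end

section
/- Let λ > 0, let c : [0,1] → ℝ be continuous with c(x) > 0 for all x ∈ [0,1], and let ρ : [0,1] → ℝ be Lebesgue integrable. Suppose V : [0,1] → ℝ is continuously differentiable with V(0) = V(1) = 0, and V' is absolutely continuous with a.e. derivative V'' ∈ L¹(0,1) satisfying −λ² V''(x) + c(x) V(x) = ρ(x) for a.e. x ∈ (0,1). Then ∫₀¹ c(x) |V(x)| dx ≤ ∫₀¹ |ρ(x)| dx. -/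
open MeasureTheory Set
open scoped Interval

/-!
Multiply the equation by `φ_ε(V)`, where `φ_ε(y) = y / √(y² + ε²)` is a smooth increasing
approximation of `sign y` with `|φ_ε| ≤ 1` and `φ_ε(0) = 0`. Integration by parts gives
`∫ V'' φ_ε(V) = -∫ φ_ε'(V) V'² ≤ 0`, hence `∫ c V φ_ε(V) ≤ ∫ ρ φ_ε(V) ≤ ∫ |ρ|`. Since
`||y| - y φ_ε(y)| ≤ ε`, the left side differs from `∫ c |V|` by at most `ε ∫ |c|`; let `ε → 0`.
-/

namespace IntervalIntegrable

variable {f : ℝ → ℝ} {a b : ℝ}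

theorem absolutelyContinuousOnInterval_const_add_integral (hf : IntervalIntegrable f volume a b)
    (C : ℝ) : AbsolutelyContinuousOnInterval (fun x ↦ C + ∫ t in a..x, f t) a b :=
  ((LipschitzWith.const C).lipschitzOnWith.absolutelyContinuousOnInterval).fun_add
    (hf.absolutelyContinuousOnInterval_intervalIntegral left_mem_uIcc)

theorem ae_deriv_const_add_integral (hf : IntervalIntegrable f volume a b) (C : ℝ) :
    ∀ᵐ x, x ∈ uIcc a b → deriv (fun x ↦ C + ∫ t in a..x, f t) x = f x := by
  filter_upwards [hf.ae_hasDerivAt_integral] with x hx hmem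
  exact ((hx hmem a left_mem_uIcc).const_add C).deriv

end IntervalIntegrable

theorem intervalIntegral.integral_mul_eq_sub_of_eq_add_integral {a b : ℝ} {f f' g g' : ℝ → ℝ}
    (hf' : IntervalIntegrable f' volume a b) (hg' : IntervalIntegrable g' volume a b)
    (hf : ∀ x ∈ uIcc a b, f x = f a + ∫ t in a..x, f' t)
    (hg : ∀ x ∈ uIcc a b, g x = g a + ∫ t in a..x, g' t) :
    ∫ x in a..b, f x * g' x = f b * g b - f a * g a - ∫ x in a..b, f' x * g x := by
  set F : ℝ → ℝ := fun x ↦ f a + ∫ t in a..x, f' t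
  set G : ℝ → ℝ := fun x ↦ g a + ∫ t in a..x, g' t
  have parts := AbsolutelyContinuousOnInterval.integral_mul_deriv_eq_deriv_mul
    (hf'.absolutelyContinuousOnInterval_const_add_integral (f a))
    (hg'.absolutelyContinuousOnInterval_const_add_integral (g a))
  rw [← hf a left_mem_uIcc, ← hf b right_mem_uIcc, ← hg a left_mem_uIcc,
    ← hg b right_mem_uIcc] at parts
  have hfg' : ∫ x in a..b, f x * g' x = ∫ x in a..b, F x * deriv G x := by
    refine intervalIntegral.integral_congr_ae ?_
    filter_upwards [hg'.ae_deriv_const_add_integral (g a)] with x hG hx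
    rw [hG (uIoc_subset_uIcc hx), hf x (uIoc_subset_uIcc hx)]
  have hf'g : ∫ x in a..b, f' x * g x = ∫ x in a..b, deriv F x * G x := by
    refine intervalIntegral.integral_congr_ae ?_
    filter_upwards [hf'.ae_deriv_const_add_integral (f a)] with x hF hx
    rw [hF (uIoc_subset_uIcc hx), hg x (uIoc_subset_uIcc hx)]
  rw [hfg', hf'g, parts]

theorem eq_add_integral_of_hasDerivWithinAt_Icc {f f' : ℝ → ℝ} {a b : ℝ}
    (hf : ∀ x ∈ Icc a b, HasDerivWithinAt f (f' x) (Icc a b) x) (hf' : ContinuousOn f' (Icc a b)) :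
    ∀ x ∈ Icc a b, f x = f a + ∫ t in a..x, f' t := by
  intro x hx
  have hsub : Icc a x ⊆ Icc a b := Icc_subset_Icc_right hx.2
  rw [intervalIntegral.integral_eq_sub_of_hasDerivAt_of_le hx.1
    ((HasDerivWithinAt.continuousOn hf).mono hsub)
    (fun t ht ↦ (hf t (Ioo_subset_Icc_self (Ioo_subset_Ioo_right hx.2 ht))).hasDerivAt
      (Icc_mem_nhds ht.1 (ht.2.trans_le hx.2)))
    ((hf'.mono hsub).intervalIntegrable_of_Icc hx.1)]
  ring

noncomputable def smoothSign (ε y : ℝ) : ℝ := y / √(y ^ 2 + ε ^ 2)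

section smoothSign

variable {ε : ℝ}

@[simp]
theorem smoothSign_zero : smoothSign ε 0 = 0 := by simp [smoothSign]

theorem abs_smoothSign_le_one (y : ℝ) : |smoothSign ε y| ≤ 1 := by
  rw [smoothSign, abs_div, abs_of_nonneg (Real.sqrt_nonneg _)]
  refine div_le_one_of_le₀ ?_ (Real.sqrt_nonneg _)
  rw [← Real.sqrt_sq_eq_abs]
  exact Real.sqrt_le_sqrt (by nlinarith)

theorem hasDerivAt_smoothSign (hε : ε ≠ 0) (y : ℝ) :
    HasDerivAt (smoothSign ε) (ε ^ 2 / √(y ^ 2 + ε ^ 2) ^ 3) y := by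
  have hq : 0 < y ^ 2 + ε ^ 2 := by positivity
  have hs : 0 < √(y ^ 2 + ε ^ 2) := Real.sqrt_pos.2 hq
  have hsq : √(y ^ 2 + ε ^ 2) ^ 2 = y ^ 2 + ε ^ 2 := Real.sq_sqrt hq.le
  refine ((hasDerivAt_id' y).fun_div (((hasDerivAt_pow 2 y).add_const (ε ^ 2)).sqrt hq.ne')
    hs.ne').congr_deriv ?_
  field_simp
  linear_combination 2 * hsq

theorem contDiff_smoothSign (hε : ε ≠ 0) : ContDiff ℝ 1 (smoothSign ε) :=
  contDiff_id.div ((by fun_prop : ContDiff ℝ 1 fun y : ℝ ↦ y ^ 2 + ε ^ 2).sqrt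
    fun y ↦ by positivity) fun y ↦ by positivity

theorem monotone_smoothSign (hε : ε ≠ 0) : Monotone (smoothSign ε) :=
  monotone_of_deriv_nonneg (fun y ↦ (hasDerivAt_smoothSign hε y).differentiableAt)
    fun y ↦ (hasDerivAt_smoothSign hε y).deriv ▸ by positivity

theorem abs_abs_sub_mul_smoothSign_le (hε : 0 ≤ ε) (y : ℝ) :
    |(|y| - y * smoothSign ε y)| ≤ ε := by
  rcases eq_or_ne y 0 with rfl | hy
  · simpa using hε
  rw [smoothSign]
  set s := √(y ^ 2 + ε ^ 2)
  have hs_ge : |y| ≤ s := by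
    rw [← Real.sqrt_sq_eq_abs]
    exact Real.sqrt_le_sqrt (by nlinarith)
  have hs_le : s ≤ |y| + ε := by
    rw [Real.sqrt_le_left (by positivity)]
    nlinarith [sq_abs y, abs_nonneg y]
  have hs : 0 < s := (abs_pos.2 hy).trans_le hs_ge
  have hdiff : |y| - y * (y / s) = |y| * (s - |y|) / s := by
    field_simp
    rw [← sq_abs y]
    ring
  rw [hdiff, abs_of_nonneg (by have := abs_nonneg y; positivity), div_le_iff₀ hs]
  nlinarith [abs_nonneg y]

end smoothSign

theorem integral_mul_monotone_comp_nonpos {a b : ℝ} (hab : a ≤ b) {V V' V'' φ : ℝ → ℝ}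
    (hV : ∀ x ∈ Icc a b, HasDerivWithinAt V (V' x) (Icc a b) x)
    (hV' : ContinuousOn V' (Icc a b)) (hV'' : IntervalIntegrable V'' volume a b)
    (hAC : ∀ x ∈ Icc a b, V' x = V' a + ∫ t in a..x, V'' t)
    (hφ : ContDiff ℝ 1 φ) (hφ_mono : Monotone φ) (ha : φ (V a) = 0) (hb : φ (V b) = 0) :
    ∫ x in a..b, V'' x * φ (V x) ≤ 0 := by
  set u' : ℝ → ℝ := fun x ↦ deriv φ (V x) * V' x
  have hu' : ContinuousOn u' (Icc a b) :=
    ((hφ.continuous_deriv le_rfl).comp_continuousOn (HasDerivWithinAt.continuousOn hV)).mul hV'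
  have hu : ∀ x ∈ uIcc a b, φ (V x) = φ (V a) + ∫ t in a..x, u' t := by
    rw [uIcc_of_le hab]
    refine eq_add_integral_of_hasDerivWithinAt_Icc (fun x hx ↦ ?_) hu'
    exact (hφ.differentiable one_ne_zero (V x)).hasDerivAt.comp_hasDerivWithinAt x (hV x hx)
  rw [← uIcc_of_le hab] at hAC hu'
  have parts := intervalIntegral.integral_mul_eq_sub_of_eq_add_integral hu'.intervalIntegrable
    hV'' hu hAC
  simp only [ha, hb, zero_mul, sub_zero, zero_sub] at parts
  rw [intervalIntegral.integral_congr fun x _ ↦ mul_comm (V'' x) (φ (V x)), parts, neg_nonpos]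
  refine intervalIntegral.integral_nonneg hab fun x _ ↦ ?_
  rw [mul_assoc]
  exact mul_nonneg hφ_mono.deriv_nonneg (mul_self_nonneg _)

theorem integral_mul_mul_smoothSign_le {a b lam ε : ℝ} (hab : a ≤ b) (hε : ε ≠ 0)
    {ρ c V V' V'' : ℝ → ℝ} (hρ : IntervalIntegrable ρ volume a b)
    (hV : ∀ x ∈ Icc a b, HasDerivWithinAt V (V' x) (Icc a b) x)
    (hV' : ContinuousOn V' (Icc a b)) (hV'' : IntervalIntegrable V'' volume a b)
    (hAC : ∀ x ∈ Icc a b, V' x = V' a + ∫ t in a..x, V'' t) (ha : V a = 0) (hb : V b = 0)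
    (heq : ∀ᵐ x ∂volume.restrict (Ioo a b), -lam ^ 2 * V'' x + c x * V x = ρ x) :
    ∫ x in a..b, c x * (V x * smoothSign ε (V x)) ≤ ∫ x in a..b, |ρ x| := by
  set u : ℝ → ℝ := fun x ↦ smoothSign ε (V x)
  have hu : ContinuousOn u (uIcc a b) := uIcc_of_le hab ▸
    (contDiff_smoothSign hε).continuous.comp_continuousOn (HasDerivWithinAt.continuousOn hV)
  have hρu := hρ.mul_continuousOn hu
  have hV''u := hV''.mul_continuousOn hu
  have heq' : ∀ᵐ x ∂volume.restrict (Ι a b), -lam ^ 2 * V'' x + c x * V x = ρ x := by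
    rwa [uIoc_of_le hab, ← Measure.restrict_congr_set Ioo_ae_eq_Ioc]
  have hsplit : ∫ x in a..b, c x * (V x * u x)
      = (∫ x in a..b, ρ x * u x) + lam ^ 2 * ∫ x in a..b, V'' x * u x := by
    rw [← intervalIntegral.integral_const_mul, ← intervalIntegral.integral_add hρu
      (hV''u.const_mul _)]
    exact intervalIntegral.integral_congr_ae_restrict
      (heq'.mono fun x hx ↦ by linear_combination u x * hx)
  have hρu_le : ∫ x in a..b, ρ x * u x ≤ ∫ x in a..b, |ρ x| := by
    refine intervalIntegral.integral_mono_on hab hρu hρ.abs fun x _ ↦ ?_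
    calc ρ x * u x ≤ |ρ x| * |u x| := abs_mul (ρ x) (u x) ▸ le_abs_self _
      _ ≤ |ρ x| := mul_le_of_le_one_right (abs_nonneg _) (abs_smoothSign_le_one _)
  have hV''u_nonpos := integral_mul_monotone_comp_nonpos hab hV hV' hV'' hAC
    (contDiff_smoothSign hε) (monotone_smoothSign hε) (by simp [ha]) (by simp [hb])
  rw [hsplit]
  linarith [mul_nonpos_of_nonneg_of_nonpos (sq_nonneg lam) hV''u_nonpos]

theorem integral_mul_abs_le_integral_mul_mul_smoothSign_add {a b ε : ℝ} (hab : a ≤ b)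
    (hε : 0 < ε) {c V : ℝ → ℝ} (hc : ContinuousOn c (Icc a b)) (hV : ContinuousOn V (Icc a b)) :
    ∫ x in a..b, c x * |V x|
      ≤ (∫ x in a..b, c x * (V x * smoothSign ε (V x))) + ε * ∫ x in a..b, |c x| := by
  rw [← uIcc_of_le hab] at hc hV
  have hφV : ContinuousOn (fun x ↦ smoothSign ε (V x)) (uIcc a b) :=
    (contDiff_smoothSign hε.ne').continuous.comp_continuousOn hV
  have hcV : IntervalIntegrable (fun x ↦ c x * |V x|) volume a b :=
    (hc.mul hV.abs).intervalIntegrable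
  have hcVφ : IntervalIntegrable (fun x ↦ c x * (V x * smoothSign ε (V x))) volume a b :=
    (hc.mul (hV.mul hφV)).intervalIntegrable
  suffices h : (∫ x in a..b, c x * |V x|) - ∫ x in a..b, c x * (V x * smoothSign ε (V x))
      ≤ ε * ∫ x in a..b, |c x| by linarith
  rw [← intervalIntegral.integral_sub hcV hcVφ, ← intervalIntegral.integral_const_mul]
  refine intervalIntegral.integral_mono_on hab (hcV.sub hcVφ)
    (hc.abs.const_smul ε).intervalIntegrable fun x _ ↦ ?_
  calc c x * |V x| - c x * (V x * smoothSign ε (V x))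
      = c x * (|V x| - V x * smoothSign ε (V x)) := by ring
    _ ≤ |c x| * |(|V x| - V x * smoothSign ε (V x))| := by
      rw [← abs_mul]; exact le_abs_self _
    _ ≤ ε * |c x| := by
      rw [mul_comm ε]
      exact mul_le_mul_of_nonneg_left (abs_abs_sub_mul_smoothSign_le hε.le _) (abs_nonneg _)

theorem linear_elliptic_L1_estimate_general (lam : ℝ)
    (c : ℝ → ℝ) (hc_cont : ContinuousOn c (Icc 0 1))
    (ρ : ℝ → ℝ) (hρ : IntegrableOn ρ (Icc 0 1))
    (V V' V'' : ℝ → ℝ)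
    (hV : ∀ x ∈ Icc (0:ℝ) 1, HasDerivWithinAt V (V' x) (Icc 0 1) x)
    (hV'cont : ContinuousOn V' (Icc 0 1))
    (hV''int : IntegrableOn V'' (Icc 0 1))
    (hAC : ∀ x ∈ Icc (0:ℝ) 1, V' x = V' 0 + ∫ t in (0:ℝ)..x, V'' t)
    (hb0 : V 0 = 0) (hb1 : V 1 = 0)
    (heq : ∀ᵐ x ∂(volume.restrict (Ioo (0:ℝ) 1)),
      -lam ^ 2 * V'' x + c x * V x = ρ x) :
    ∫ x in (0:ℝ)..1, c x * |V x| ≤ ∫ x in (0:ℝ)..1, |ρ x| := by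
  have hρ' := (intervalIntegrable_iff_integrableOn_Icc_of_le zero_le_one).2 hρ
  have hV''int' := (intervalIntegrable_iff_integrableOn_Icc_of_le zero_le_one).2 hV''int
  have hbound : ∀ ε > 0, ∫ x in (0:ℝ)..1, c x * |V x|
      ≤ (∫ x in (0:ℝ)..1, |ρ x|) + ε * ∫ x in (0:ℝ)..1, |c x| := fun ε hε ↦ by
    have hsign := integral_mul_mul_smoothSign_le zero_le_one hε.ne' hρ' hV hV'cont hV''int' hAC
      hb0 hb1 heq
    have happrox := integral_mul_abs_le_integral_mul_mul_smoothSign_add zero_le_one hε hc_cont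
      (HasDerivWithinAt.continuousOn hV)
    linarith
  have hcont : Continuous fun ε : ℝ ↦ (∫ x in (0:ℝ)..1, |ρ x|) + ε * ∫ x in (0:ℝ)..1, |c x| := by
    fun_prop
  exact ge_of_tendsto ((hcont.tendsto' 0 _ (by simp)).mono_left nhdsWithin_le_nhds)
    (eventually_nhdsWithin_of_forall (s := Ioi 0) hbound)

/-- `L¹` estimate `∫ c |V| ≤ ∫ |ρ|` for a strong solution `V ∈ W^{2,1}(0,1)` of the
linear elliptic problem `-λ² V'' + c V = ρ` with homogeneous Dirichlet boundary conditions. -/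
theorem linear_elliptic_L1_estimate (lam : ℝ) (hlam : 0 < lam)
    (c : ℝ → ℝ) (hc_cont : ContinuousOn c (Icc 0 1))
    (hc_pos : ∀ x ∈ Icc (0:ℝ) 1, 0 < c x)
    (ρ : ℝ → ℝ) (hρ : IntegrableOn ρ (Icc 0 1))
    (V V' V'' : ℝ → ℝ)
    (hV : ∀ x ∈ Icc (0:ℝ) 1, HasDerivWithinAt V (V' x) (Icc 0 1) x)
    (hV'cont : ContinuousOn V' (Icc 0 1))
    (hV''int : IntegrableOn V'' (Icc 0 1))
    (hAC : ∀ x ∈ Icc (0:ℝ) 1, V' x = V' 0 + ∫ t in (0:ℝ)..x, V'' t)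
    (hb0 : V 0 = 0) (hb1 : V 1 = 0)
    (heq : ∀ᵐ x ∂(volume.restrict (Ioo (0:ℝ) 1)),
      -lam ^ 2 * V'' x + c x * V x = ρ x) :
    ∫ x in (0:ℝ)..1, c x * |V x| ≤ ∫ x in (0:ℝ)..1, |ρ x| :=
  linear_elliptic_L1_estimate_general lam c hc_cont ρ hρ V V' V'' hV hV'cont hV''int hAC hb0 hb1 heq
end

section
/- Let λ > 0, let c : [0,1] → ℝ be continuous with c(x) > 0 for all x ∈ [0,1], and let ρ : [0,1] → ℝ be Lebesgue integrable. Suppose V : [0,1] → ℝ is continuously differentiable with V(0) = V(1) = 0, and V' is absolutely continuous with a.e. derivative V'' ∈ L¹(0,1) satisfying −λ² V''(x) + c(x) V(x) = ρ(x) for a.e. x ∈ (0,1). Then ∫₀¹ |V''(x)| dx ≤ (2/λ²) ∫₀¹ |ρ(x)| dx and sup_{x ∈ [0,1]} |V'(x)| ≤ (2/λ²) ∫₀¹ |ρ(x)| dx. -/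
/-!
Testing the equation against `φₙ(V)`, where `φₙ = (2/π) arctan (n ·)` approximates the sign
function, gives `∫ c V φₙ(V) ≤ ∫ |ρ| + λ² ∫ V'' φₙ(V)`, and integrating by parts
`∫ V'' φₙ(V) = -∫ φₙ'(V) V'² ≤ 0` because `V` vanishes at both ends. Letting `n → ∞` yields
Kato's inequality `∫ c |V| ≤ ∫ |ρ|`, so the equation gives
`λ² ∫ |V''| ≤ ∫ c |V| + ∫ |ρ| ≤ 2 ∫ |ρ|`. Finally `V'` vanishes somewhere by Rolle's theorem,
so `|V'| ≤ ∫ |V''|` everywhere.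
-/

open MeasureTheory Set Filter Real Topology

noncomputable def approxSign (n : ℕ) (v : ℝ) : ℝ := 2 / π * arctan (n * v)

lemma contDiff_approxSign (n : ℕ) : ContDiff ℝ 1 (approxSign n) :=
  contDiff_const.mul (contDiff_arctan.comp (contDiff_const.mul contDiff_id))

lemma monotone_approxSign (n : ℕ) : Monotone (approxSign n) := fun v w hvw => by
  unfold approxSign
  gcongr

lemma approxSign_apply_zero (n : ℕ) : approxSign n 0 = 0 := by simp [approxSign]

lemma approxSign_neg (n : ℕ) (v : ℝ) : approxSign n (-v) = -approxSign n v := by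
  simp [approxSign, arctan_neg]

lemma abs_approxSign_le_one (n : ℕ) (v : ℝ) : |approxSign n v| ≤ 1 := by
  rw [approxSign, abs_mul, abs_of_pos (by positivity : (0:ℝ) < 2 / π),
    div_mul_eq_mul_div, div_le_one pi_pos]
  have := neg_pi_div_two_lt_arctan (n * v)
  have := arctan_lt_pi_div_two (n * v)
  cases abs_cases (arctan (n * v)) <;> linarith

lemma tendsto_approxSign_of_pos {v : ℝ} (hv : 0 < v) :
    Tendsto (fun n => approxSign n v) atTop (𝓝 1) := by
  have hlim : Tendsto (fun n : ℕ => arctan (n * v)) atTop (𝓝 (π / 2)) :=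
    (tendsto_nhds_of_tendsto_nhdsWithin tendsto_arctan_atTop).comp
      (tendsto_natCast_atTop_atTop.atTop_mul_const hv)
  have h : 2 / π * (π / 2) = 1 := by field_simp
  simpa only [approxSign, h] using hlim.const_mul (2 / π)

lemma tendsto_mul_approxSign (v : ℝ) :
    Tendsto (fun n => v * approxSign n v) atTop (𝓝 |v|) := by
  have hodd : ∀ n, v * approxSign n v = |v| * approxSign n |v| := fun n => by
    rcases abs_cases v with ⟨h, -⟩ | ⟨h, -⟩ <;> rw [h]
    rw [approxSign_neg]; ring
  simp_rw [hodd]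
  rcases (abs_nonneg v).eq_or_lt with h | h
  · simp [← h]
  · simpa using (tendsto_approxSign_of_pos h).const_mul |v|

lemma tendsto_integral_mul_mul_approxSign {α : Type*} [MeasurableSpace α] {μ : Measure α}
    {f w : α → ℝ} (hw : AEStronglyMeasurable w μ) (hfw : Integrable (fun x => f x * w x) μ) :
    Tendsto (fun n => ∫ x, f x * (w x * approxSign n (w x)) ∂μ) atTop
      (𝓝 (∫ x, f x * |w x| ∂μ)) := by
  refine tendsto_integral_of_dominated_convergence (fun x => ‖f x * w x‖) (fun n => ?_)
    hfw.norm (fun n => ae_of_all _ fun x => ?_) (ae_of_all _ fun x => ?_)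
  · simp_rw [← mul_assoc]
    exact hfw.aestronglyMeasurable.mul
      ((contDiff_approxSign n).continuous.comp_aestronglyMeasurable hw)
  · rw [← mul_assoc, norm_mul]
    exact mul_le_of_le_one_right (norm_nonneg _) (abs_approxSign_le_one n _)
  · exact (tendsto_mul_approxSign (w x)).const_mul (f x)

lemma absolutelyContinuousOnInterval_of_hasDerivWithinAt {f f' : ℝ → ℝ} {a b : ℝ} (hab : a ≤ b)
    (hf : ∀ x ∈ Icc a b, HasDerivWithinAt f (f' x) (Icc a b) x)
    (hf' : ContinuousOn f' (Icc a b)) : AbsolutelyContinuousOnInterval f a b := by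
  obtain ⟨C, hC⟩ := isCompact_Icc.exists_bound_of_continuousOn hf'
  have hlip : LipschitzOnWith C.toNNReal f (Icc a b) :=
    (convex_Icc a b).lipschitzOnWith_of_nnnorm_hasDerivWithin_le hf fun x hx => by
      rw [← NNReal.coe_le_coe, coe_nnnorm, Real.coe_toNNReal']
      exact (hC x hx).trans (le_max_left _ _)
  rw [← uIcc_of_le hab] at hlip
  exact hlip.absolutelyContinuousOnInterval

/-- `V ∈ W^{2,1}(a, b)` with `V a = V b = 0`; `V'` is absolutely continuous as a primitive
of `V''`. -/
structure IsW21Dirichlet (a b : ℝ) (V V' V'' : ℝ → ℝ) : Prop where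
  hasDerivWithinAt : ∀ x ∈ Icc a b, HasDerivWithinAt V (V' x) (Icc a b) x
  integrableOn : IntegrableOn V'' (Icc a b)
  eq_add_integral : ∀ x ∈ Icc a b, V' x = V' a + ∫ t in a..x, V'' t
  left : V a = 0
  right : V b = 0

namespace IsW21Dirichlet

variable {a b : ℝ} {V V' V'' : ℝ → ℝ}

lemma intervalIntegrable (h : IsW21Dirichlet a b V V' V'') (hab : a ≤ b) :
    IntervalIntegrable V'' volume a b :=
  (h.integrableOn.mono_set (uIcc_of_le hab).subset).intervalIntegrable

lemma continuousOn (h : IsW21Dirichlet a b V V' V'') : ContinuousOn V (Icc a b) :=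
  fun x hx => (h.hasDerivWithinAt x hx).continuousWithinAt

lemma continuousOn_deriv (h : IsW21Dirichlet a b V V' V'') (hab : a ≤ b) :
    ContinuousOn V' (Icc a b) := by
  have hprim := intervalIntegral.continuousOn_primitive_interval
    (h.integrableOn.mono_set (uIcc_of_le hab).subset)
  rw [uIcc_of_le hab] at hprim
  exact (continuousOn_const.add hprim).congr h.eq_add_integral

lemma integral_mul_comp_nonpos (h : IsW21Dirichlet a b V V' V'') (hab : a ≤ b) {φ : ℝ → ℝ}
    (hφ : ContDiff ℝ 1 φ) (hφm : Monotone φ) (hφ0 : φ 0 = 0) :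
    ∫ x in a..b, V'' x * φ (V x) ≤ 0 := by
  have hV'' := h.intervalIntegrable hab
  set F : ℝ → ℝ := fun x => V' a + ∫ t in a..x, V'' t
  have hF : AbsolutelyContinuousOnInterval F a b :=
    (LipschitzWith.const (V' a)).lipschitzOnWith.absolutelyContinuousOnInterval.fun_add
      (hV''.absolutelyContinuousOnInterval_intervalIntegral left_mem_uIcc)
  have hG : ∀ x ∈ Icc a b,
      HasDerivWithinAt (fun x => φ (V x)) (deriv φ (V x) * V' x) (Icc a b) x := fun x hx =>
    ((hφ.differentiable one_ne_zero) (V x)).hasDerivAt.comp_hasDerivWithinAt x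
      (h.hasDerivWithinAt x hx)
  have hGcont : ContinuousOn (fun x => deriv φ (V x) * V' x) (Icc a b) :=
    ((hφ.continuous_deriv le_rfl).comp_continuousOn h.continuousOn).mul
      (h.continuousOn_deriv hab)
  have hIBP := (absolutelyContinuousOnInterval_of_hasDerivWithinAt hab hG hGcont
    ).integral_mul_deriv_eq_deriv_mul hF
  have hderivF : ∫ x in a..b, φ (V x) * deriv F x = ∫ x in a..b, V'' x * φ (V x) := by
    refine intervalIntegral.integral_congr_ae ?_
    filter_upwards [hV''.ae_hasDerivAt_integral] with x hx hxI
    rw [((hx (uIoc_subset_uIcc hxI) a left_mem_uIcc).const_add (V' a)).deriv, mul_comm]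
  have hderivG : ∫ x in a..b, deriv (fun x => φ (V x)) x * F x
      = ∫ x in a..b, deriv φ (V x) * V' x ^ 2 := by
    refine intervalIntegral.integral_congr_Ioo_of_le hab fun x hx => ?_
    have hx' := Ioo_subset_Icc_self hx
    simp only [F, ← h.eq_add_integral x hx',
      ((hG x hx').hasDerivAt (Icc_mem_nhds hx.1 hx.2)).deriv]
    ring
  have hnonneg : 0 ≤ ∫ x in a..b, deriv φ (V x) * V' x ^ 2 :=
    intervalIntegral.integral_nonneg hab fun x _ => mul_nonneg hφm.deriv_nonneg (sq_nonneg _)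
  rw [h.left, h.right, hφ0, hderivF, hderivG] at hIBP
  linarith

lemma abs_deriv_le_integral_abs (h : IsW21Dirichlet a b V V' V'') (hab : a < b) {x : ℝ}
    (hx : x ∈ Icc a b) : |V' x| ≤ ∫ t in a..b, |V'' t| := by
  obtain ⟨ξ, hξ, hV'ξ⟩ := exists_hasDerivAt_eq_zero hab h.continuousOn
    (h.left.trans h.right.symm) fun y hy =>
      (h.hasDerivWithinAt y (Ioo_subset_Icc_self hy)).hasDerivAt (Icc_mem_nhds hy.1 hy.2)
  have hii : ∀ y ∈ Icc a b, IntervalIntegrable V'' volume a y := fun y hy =>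
    (h.intervalIntegrable hab.le).mono_set
      (uIcc_subset_uIcc left_mem_uIcc (uIcc_of_le hab.le ▸ hy))
  have hV'x : V' x = ∫ t in ξ..x, V'' t := by
    have hξ' := Ioo_subset_Icc_self hξ
    rw [← intervalIntegral.integral_interval_sub_left (hii x hx) (hii ξ hξ'),
      ← sub_zero (V' x), ← hV'ξ, h.eq_add_integral x hx, h.eq_add_integral ξ hξ']
    ring
  calc |V' x| ≤ ∫ t in uIoc ξ x, |V'' t| := by
        simpa only [hV'x, Real.norm_eq_abs] using
          intervalIntegral.norm_integral_le_integral_norm_uIoc (f := V'') (a := ξ) (b := x)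
    _ ≤ ∫ t in Ioc a b, |V'' t| := by
        refine setIntegral_mono_set (h.intervalIntegrable hab.le).1.abs
          (ae_of_all _ fun t => abs_nonneg _) (LE.le.eventuallyLE ?_)
        exact Ioc_subset_Ioc (le_min hξ.1.le hx.1) (max_le hξ.2.le hx.2)
    _ = ∫ t in a..b, |V'' t| := (intervalIntegral.integral_of_le hab.le).symm

section Equation

variable {lam : ℝ} {c ρ : ℝ → ℝ}

lemma integral_mul_mul_comp_le (h : IsW21Dirichlet a b V V' V'') (hab : a ≤ b) {φ : ℝ → ℝ}
    (hφ : ContDiff ℝ 1 φ) (hφm : Monotone φ) (hφ0 : φ 0 = 0) (hφ1 : ∀ v, |φ v| ≤ 1)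
    (hρ : IntervalIntegrable ρ volume a b)
    (heq : ∀ᵐ x ∂(volume.restrict (Ioo a b)), -lam ^ 2 * V'' x + c x * V x = ρ x) :
    ∫ x in a..b, c x * (V x * φ (V x)) ≤ ∫ x in a..b, |ρ x| := by
  have hφV : ContinuousOn (fun x => φ (V x)) (uIcc a b) :=
    uIcc_of_le hab ▸ hφ.continuous.comp_continuousOn h.continuousOn
  have hφVρ := hρ.continuousOn_mul hφV
  have hV''φV := (h.intervalIntegrable hab).mul_continuousOn hφV
  have hsplit : ∀ᵐ x ∂volume.restrict (uIoc a b),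
      c x * (V x * φ (V x)) = φ (V x) * ρ x + lam ^ 2 * (V'' x * φ (V x)) := by
    rw [uIoc_of_le hab, ← Measure.restrict_congr_set Ioo_ae_eq_Ioc]
    filter_upwards [heq] with x hx
    rw [← hx]
    ring
  have hφVρ_le : ∫ x in a..b, φ (V x) * ρ x ≤ ∫ x in a..b, |ρ x| :=
    intervalIntegral.integral_mono_on hab hφVρ hρ.abs fun x _ => by
      calc φ (V x) * ρ x ≤ |φ (V x)| * |ρ x| := (le_abs_self _).trans (abs_mul _ _).le
        _ ≤ |ρ x| := mul_le_of_le_one_left (abs_nonneg _) (hφ1 _)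
  have hV''φV_nonpos := mul_nonpos_of_nonneg_of_nonpos (sq_nonneg lam)
    (h.integral_mul_comp_nonpos hab hφ hφm hφ0)
  rw [intervalIntegral.integral_congr_ae_restrict hsplit, intervalIntegral.integral_add hφVρ
    (hV''φV.const_mul _), intervalIntegral.integral_const_mul]
  linarith

lemma integral_mul_abs_le_integral_abs (h : IsW21Dirichlet a b V V' V'') (hab : a ≤ b)
    (hc : ContinuousOn c (Icc a b)) (hρ : IntervalIntegrable ρ volume a b)
    (heq : ∀ᵐ x ∂(volume.restrict (Ioo a b)), -lam ^ 2 * V'' x + c x * V x = ρ x) :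
    ∫ x in a..b, c x * |V x| ≤ ∫ x in a..b, |ρ x| := by
  have hcV : IntegrableOn (fun x => c x * V x) (Ioc a b) :=
    ((hc.mul h.continuousOn).integrableOn_Icc).mono_set Ioc_subset_Icc_self
  have hlim := tendsto_integral_mul_mul_approxSign
    ((h.continuousOn.mono Ioc_subset_Icc_self).aestronglyMeasurable measurableSet_Ioc) hcV
  simp only [← intervalIntegral.integral_of_le hab] at hlim
  exact le_of_tendsto' hlim fun n => h.integral_mul_mul_comp_le hab (contDiff_approxSign n)
    (monotone_approxSign n) (approxSign_apply_zero n) (abs_approxSign_le_one n) hρ heq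

lemma sq_mul_integral_abs_le (h : IsW21Dirichlet a b V V' V'') (hab : a ≤ b)
    (hc : ContinuousOn c (Icc a b)) (hc0 : ∀ x ∈ Icc a b, 0 ≤ c x)
    (hρ : IntervalIntegrable ρ volume a b)
    (heq : ∀ᵐ x ∂(volume.restrict (Ioo a b)), -lam ^ 2 * V'' x + c x * V x = ρ x) :
    lam ^ 2 * ∫ x in a..b, |V'' x| ≤ 2 * ∫ x in a..b, |ρ x| := by
  have hcV : IntervalIntegrable (fun x => c x * |V x|) volume a b :=
    (hc.mul h.continuousOn.abs).intervalIntegrable_of_Icc hab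
  have hpointwise : ∀ᵐ x ∂(volume.restrict (Icc a b)),
      lam ^ 2 * |V'' x| ≤ c x * |V x| + |ρ x| := by
    rw [← Measure.restrict_congr_set Ioo_ae_eq_Icc]
    filter_upwards [heq, ae_restrict_mem measurableSet_Ioo] with x hx hxI
    calc lam ^ 2 * |V'' x| = |c x * V x - ρ x| := by
          rw [← hx, show c x * V x - (-lam ^ 2 * V'' x + c x * V x) = lam ^ 2 * V'' x by ring,
            abs_mul, abs_of_nonneg (sq_nonneg lam)]
      _ ≤ |c x * V x| + |ρ x| := abs_sub _ _
      _ = c x * |V x| + |ρ x| := by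
          rw [abs_mul, abs_of_nonneg (hc0 x (Ioo_subset_Icc_self hxI))]
  calc lam ^ 2 * ∫ x in a..b, |V'' x| = ∫ x in a..b, lam ^ 2 * |V'' x| :=
        (intervalIntegral.integral_const_mul _ _).symm
    _ ≤ ∫ x in a..b, (c x * |V x| + |ρ x|) :=
        intervalIntegral.integral_mono_ae_restrict hab
          ((h.intervalIntegrable hab).abs.const_mul _) (hcV.add hρ.abs) hpointwise
    _ = (∫ x in a..b, c x * |V x|) + ∫ x in a..b, |ρ x| :=
        intervalIntegral.integral_add hcV hρ.abs
    _ ≤ 2 * ∫ x in a..b, |ρ x| := by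
        linarith [h.integral_mul_abs_le_integral_abs hab hc hρ heq]

end Equation

end IsW21Dirichlet

theorem linear_elliptic_W1inf_estimate_general (lam : ℝ) (hlam : 0 < lam)
    (c : ℝ → ℝ) (hc_cont : ContinuousOn c (Icc 0 1))
    (hc_pos : ∀ x ∈ Icc (0:ℝ) 1, 0 < c x)
    (ρ : ℝ → ℝ) (hρ : IntegrableOn ρ (Icc 0 1))
    (V V' V'' : ℝ → ℝ)
    (hV : ∀ x ∈ Icc (0:ℝ) 1, HasDerivWithinAt V (V' x) (Icc 0 1) x)
    (hV''int : IntegrableOn V'' (Icc 0 1))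
    (hAC : ∀ x ∈ Icc (0:ℝ) 1, V' x = V' 0 + ∫ t in (0:ℝ)..x, V'' t)
    (hb0 : V 0 = 0) (hb1 : V 1 = 0)
    (heq : ∀ᵐ x ∂(volume.restrict (Ioo (0:ℝ) 1)),
      -lam ^ 2 * V'' x + c x * V x = ρ x) :
    (∫ x in (0:ℝ)..1, |V'' x|) ≤ 2 / lam ^ 2 * ∫ x in (0:ℝ)..1, |ρ x| ∧
    ∀ x ∈ Icc (0:ℝ) 1, |V' x| ≤ 2 / lam ^ 2 * ∫ x in (0:ℝ)..1, |ρ x| := by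
  have hW : IsW21Dirichlet 0 1 V V' V'' := ⟨hV, hV''int, hAC, hb0, hb1⟩
  have hρ' : IntervalIntegrable ρ volume 0 1 :=
    (hρ.mono_set (uIcc_of_le zero_le_one).subset).intervalIntegrable
  have hV''bound : ∫ x in (0:ℝ)..1, |V'' x| ≤ 2 / lam ^ 2 * ∫ x in (0:ℝ)..1, |ρ x| := by
    rw [div_mul_eq_mul_div, le_div_iff₀ (by positivity), mul_comm]
    exact hW.sq_mul_integral_abs_le zero_le_one hc_cont (fun x hx => (hc_pos x hx).le) hρ' heq
  exact ⟨hV''bound, fun x hx => (hW.abs_deriv_le_integral_abs zero_lt_one hx).trans hV''bound⟩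

/-- `W^{1,∞}` estimates `∫ |V''| ≤ (2/λ²) ∫ |ρ|` and `sup |V'| ≤ (2/λ²) ∫ |ρ|`
for a strong solution `V ∈ W^{2,1}(0,1)` of the linear elliptic problem
`-λ² V'' + c V = ρ` with homogeneous Dirichlet boundary conditions. -/
theorem linear_elliptic_W1inf_estimate (lam : ℝ) (hlam : 0 < lam)
    (c : ℝ → ℝ) (hc_cont : ContinuousOn c (Icc 0 1))
    (hc_pos : ∀ x ∈ Icc (0:ℝ) 1, 0 < c x)
    (ρ : ℝ → ℝ) (hρ : IntegrableOn ρ (Icc 0 1))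
    (V V' V'' : ℝ → ℝ)
    (hV : ∀ x ∈ Icc (0:ℝ) 1, HasDerivWithinAt V (V' x) (Icc 0 1) x)
    (hV'cont : ContinuousOn V' (Icc 0 1))
    (hV''int : IntegrableOn V'' (Icc 0 1))
    (hAC : ∀ x ∈ Icc (0:ℝ) 1, V' x = V' 0 + ∫ t in (0:ℝ)..x, V'' t)
    (hb0 : V 0 = 0) (hb1 : V 1 = 0)
    (heq : ∀ᵐ x ∂(volume.restrict (Ioo (0:ℝ) 1)),
      -lam ^ 2 * V'' x + c x * V x = ρ x) :
    (∫ x in (0:ℝ)..1, |V'' x|) ≤ 2 / lam ^ 2 * ∫ x in (0:ℝ)..1, |ρ x| ∧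
    ∀ x ∈ Icc (0:ℝ) 1, |V' x| ≤ 2 / lam ^ 2 * ∫ x in (0:ℝ)..1, |ρ x| :=
  linear_elliptic_W1inf_estimate_general lam hlam c hc_cont hc_pos ρ hρ V V' V'' hV hV''int hAC hb0
    hb1 heq
end

section
/- Let λ > 0, let n_e : ℝ → ℝ be continuously differentiable with n_e'(s) > 0 for all s ∈ ℝ, let φ : [0,1] → ℝ be continuous, and let ρ : [0,1] → ℝ be measurable and essentially bounded. Suppose W : [0,1] → ℝ is continuously differentiable with W(0) = W(1) = 0, and W' is absolutely continuous with a.e. derivative W'' satisfying −λ² W''(x) + n_e(φ(x) + W(x)) − n_e(φ(x)) = ρ(x) for a.e. x ∈ (0,1). Set a = sup_{x ∈ [0,1]} |φ(x)| + (2/λ²)‖ρ‖_{L^∞(0,1)} and M = sup_{s ∈ [−a,a]} n_e'(s). Then sup_{x ∈ [0,1]} |n_e(φ(x) + W(x)) − n_e(φ(x))| ≤ (2M/λ²)‖ρ‖_{L^∞(0,1)} and λ² esssup_{x ∈ (0,1)} |W''(x)| ≤ (2M/λ² + 1)‖ρ‖_{L^∞(0,1)}. -/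
/-!
Where `W > 0`, monotonicity of `n_e` and the equation give `λ² W'' ≥ -‖ρ‖∞`, and where `W < 0`
they give `λ² W'' ≤ ‖ρ‖∞`. A maximum principle then compares `±W` with the parabola
`(c/2) x (1 - x)`, `c = ‖ρ‖∞ / λ²`: at an interior maximum `x₀` of `V = W - (c/2) x (1 - x)` with
`V x₀ > 0` we have `V' x₀ = 0`, and `V'` is nondecreasing on the interval to the left of `x₀`
where `V > 0` (there `W > 0`), so `V` decreases along it from a point where `V ≤ 0`.
Hence `|W| ≤ c/8`, so `φ` and `φ + W` stay in `[-a, a]`; the mean value theorem bounds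
`n_e(φ + W) - n_e(φ)` by `M |W|`, and the equation then bounds `λ² |W''|`.
-/

open MeasureTheory Set Filter

theorem exists_le_zero_forall_Ioo_pos {f : ℝ → ℝ} {a x : ℝ} (hax : a ≤ x)
    (hf : ContinuousOn f (Icc a x)) (ha : f a ≤ 0) (hx : 0 < f x) :
    ∃ α ∈ Ico a x, f α ≤ 0 ∧ ∀ t ∈ Ioo α x, 0 < f t := by
  set S := Icc a x ∩ f ⁻¹' Iic 0
  have hS : IsClosed S := hf.preimage_isClosed_of_isClosed isClosed_Icc isClosed_Iic
  have hbdd : BddAbove S := ⟨x, fun y hy => hy.1.2⟩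
  obtain ⟨⟨haα, hαx⟩, hα⟩ := hS.csSup_mem ⟨a, ⟨le_rfl, hax⟩, ha⟩ hbdd
  refine ⟨sSup S, ⟨haα, hαx.lt_of_ne ?_⟩, hα, fun t ht => ?_⟩
  · rintro hαx
    exact hα.not_gt (hαx ▸ hx)
  · by_contra! ht0
    exact (le_csSup hbdd ⟨⟨haα.trans ht.1.le, ht.2.le⟩, ht0⟩).not_gt ht.1

section SecondDerivative

variable {W W' W'' : ℝ → ℝ} {a b c : ℝ}

theorem sub_eq_intervalIntegral_of_eq_add_integral (hW'' : IntegrableOn W'' (Icc a b))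
    (hAC : ∀ x ∈ Icc a b, W' x = W' a + ∫ t in a..x, W'' t) {x y : ℝ}
    (hx : x ∈ Icc a b) (hy : y ∈ Icc a b) :
    W' y - W' x = ∫ t in x..y, W'' t := by
  have hint : ∀ z ∈ Icc a b, IntervalIntegrable W'' volume a z := fun z hz =>
    (hW''.mono_set (by rw [uIcc_of_le hz.1]; exact Icc_subset_Icc le_rfl hz.2)).intervalIntegrable
  rw [hAC y hy, hAC x hx, add_sub_add_left_eq_sub,
    intervalIntegral.integral_interval_sub_left (hint y hy) (hint x hx)]

theorem neg_mul_le_sub_of_ae_neg_le (hW'' : IntegrableOn W'' (Icc a b))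
    (hAC : ∀ x ∈ Icc a b, W' x = W' a + ∫ t in a..x, W'' t) {x y : ℝ}
    (hx : x ∈ Icc a b) (hy : y ∈ Icc a b) (hxy : x ≤ y)
    (hlow : ∀ᵐ t ∂volume.restrict (Ioo x y), -c ≤ W'' t) :
    -c * (y - x) ≤ W' y - W' x := by
  rw [sub_eq_intervalIntegral_of_eq_add_integral hW'' hAC hx hy]
  have hconst : ∫ _ in x..y, -c = -c * (y - x) := by simp [mul_comm]
  rw [← hconst]
  refine intervalIntegral.integral_mono_ae_restrict hxy intervalIntegrable_const
    ((hW''.mono_set ?_).intervalIntegrable) ?_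
  · rw [uIcc_of_le hxy]
    exact Icc_subset_Icc hx.1 hy.2
  · rwa [Measure.restrict_congr_set Ioo_ae_eq_Icc.symm]

theorem le_parabola_of_second_deriv_ge_on_pos
    (hW : ∀ x ∈ Icc a b, HasDerivWithinAt W (W' x) (Icc a b) x)
    (hW'' : IntegrableOn W'' (Icc a b)) (hAC : ∀ x ∈ Icc a b, W' x = W' a + ∫ t in a..x, W'' t)
    (ha : W a ≤ 0) (hb : W b ≤ 0) (hc : 0 ≤ c)
    (hlow : ∀ᵐ x ∂volume.restrict (Ioo a b), 0 < W x → -c ≤ W'' x) :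
    ∀ x ∈ Icc a b, W x ≤ c / 2 * ((x - a) * (b - x)) := by
  set V := fun x => W x - c / 2 * ((x - a) * (b - x))
  have hV_apply : ∀ x, V x = W x - c / 2 * ((x - a) * (b - x)) := fun _ => rfl
  have hparab : ∀ x ∈ Icc a b, 0 ≤ c / 2 * ((x - a) * (b - x)) := fun x hx =>
    mul_nonneg (by positivity) (mul_nonneg (sub_nonneg.2 hx.1) (sub_nonneg.2 hx.2))
  have hVc : ContinuousOn V (Icc a b) :=
    ContinuousOn.sub (fun x hx => (hW x hx).continuousWithinAt) (by fun_prop)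
  have hV : ∀ x ∈ Ioo a b, HasDerivAt V (W' x - c / 2 * (a + b - 2 * x)) x := by
    intro x hx
    have hpoly := (((hasDerivAt_id' x).sub_const a).mul ((hasDerivAt_id' x).const_sub b)).const_mul
      (c / 2)
    exact (((hW x (Ioo_subset_Icc_self hx)).hasDerivAt (Icc_mem_nhds hx.1 hx.2)).sub
      hpoly).congr_deriv (by ring)
  intro x hx
  obtain ⟨x₀, hx₀, hmax⟩ := isCompact_Icc.exists_isMaxOn ⟨x, hx⟩ hVc
  suffices hV₀ : V x₀ ≤ 0 by linarith [show V x ≤ V x₀ from hmax hx, hV_apply x]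
  by_contra! hpos
  have hx₀' : x₀ ∈ Ioo a b := by
    refine ⟨hx₀.1.lt_of_ne ?_, hx₀.2.lt_of_ne ?_⟩ <;> rintro rfl <;> simp [V] at hpos <;> linarith
  have hV'x₀ : W' x₀ - c / 2 * (a + b - 2 * x₀) = 0 :=
    (hmax.isLocalMax (Icc_mem_nhds hx₀'.1 hx₀'.2)).hasDerivAt_eq_zero (hV x₀ hx₀')
  obtain ⟨α, ⟨haα, hαx₀⟩, hVα, hVpos⟩ := exists_le_zero_forall_Ioo_pos hx₀.1
    (hVc.mono (Icc_subset_Icc le_rfl hx₀.2)) (by simp [V, ha]) hpos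
  have hV'nonpos : ∀ t ∈ Ioo α x₀, W' t - c / 2 * (a + b - 2 * t) ≤ 0 := by
    intro t ht
    have hlow' : ∀ᵐ s ∂volume.restrict (Ioo t x₀), -c ≤ W'' s := by
      filter_upwards [ae_restrict_of_ae_restrict_of_subset
        (Ioo_subset_Ioo (haα.trans ht.1.le) hx₀.2) hlow, ae_restrict_mem measurableSet_Ioo]
        with s hs hst
      have hsα : s ∈ Icc a b := ⟨haα.trans (ht.1.trans hst.1).le, hst.2.le.trans hx₀.2⟩
      exact hs (by linarith [hVpos s ⟨ht.1.trans hst.1, hst.2⟩, hparab s hsα, hV_apply s])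
    have := neg_mul_le_sub_of_ae_neg_le hW'' hAC
      ⟨haα.trans ht.1.le, ht.2.le.trans hx₀.2⟩ hx₀ ht.2.le hlow'
    linarith
  have hanti : AntitoneOn V (Icc α x₀) := by
    have hV' : ∀ t ∈ Ioo α x₀, HasDerivAt V (W' t - c / 2 * (a + b - 2 * t)) t :=
      fun t ht => hV t ⟨haα.trans_lt ht.1, ht.2.trans_le hx₀.2⟩
    refine antitoneOn_of_deriv_nonpos (convex_Icc _ _) (hVc.mono (Icc_subset_Icc haα hx₀.2)) ?_ ?_
      <;> rw [interior_Icc]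
    · exact fun t ht => (hV' t ht).differentiableAt.differentiableWithinAt
    · exact fun t ht => (hV' t ht).deriv ▸ hV'nonpos t ht
  linarith [hanti ⟨le_rfl, hαx₀.le⟩ ⟨hαx₀.le, le_rfl⟩ hαx₀.le]

theorem abs_le_parabola_of_second_deriv_sign
    (hW : ∀ x ∈ Icc a b, HasDerivWithinAt W (W' x) (Icc a b) x)
    (hW'' : IntegrableOn W'' (Icc a b)) (hAC : ∀ x ∈ Icc a b, W' x = W' a + ∫ t in a..x, W'' t)
    (ha : W a = 0) (hb : W b = 0) (hc : 0 ≤ c)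
    (hpos : ∀ᵐ x ∂volume.restrict (Ioo a b), 0 < W x → -c ≤ W'' x)
    (hneg : ∀ᵐ x ∂volume.restrict (Ioo a b), W x < 0 → W'' x ≤ c) :
    ∀ x ∈ Icc a b, |W x| ≤ c / 2 * ((x - a) * (b - x)) := by
  have hAC_neg : ∀ x ∈ Icc a b, -W' x = -W' a + ∫ t in a..x, -W'' t := fun x hx => by
    rw [intervalIntegral.integral_neg, hAC x hx, neg_add]
  have hneg' : ∀ᵐ x ∂volume.restrict (Ioo a b), 0 < -W x → -c ≤ -W'' x :=
    hneg.mono fun x hx hWx => neg_le_neg (hx (neg_pos.1 hWx))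
  intro x hx
  refine abs_le.2 ⟨?_, le_parabola_of_second_deriv_ge_on_pos hW hW'' hAC ha.le hb.le hc hpos x hx⟩
  have := le_parabola_of_second_deriv_ge_on_pos (W := fun x => -W x) (fun y hy => (hW y hy).neg)
    hW''.neg hAC_neg (by simp [ha]) (by simp [hb]) hc hneg' x hx
  linarith

end SecondDerivative

theorem abs_sub_le_sSup_deriv_mul_of_abs_le {f : ℝ → ℝ} (hf : ContDiff ℝ 1 f)
    (hf' : ∀ s, 0 ≤ deriv f s) {p w P d : ℝ} (hp : |p| ≤ P) (hw : |w| ≤ d) :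
    |f (p + w) - f p| ≤ sSup (deriv f '' Icc (-(P + d)) (P + d)) * d := by
  have hp_mem : p ∈ Icc (-(P + d)) (P + d) := by
    constructor <;> linarith [abs_le.1 hp, abs_nonneg w]
  have hpw_mem : p + w ∈ Icc (-(P + d)) (P + d) := by
    constructor <;> linarith [abs_le.1 hp, abs_le.1 hw]
  have hbound :
      ∀ s ∈ Icc (-(P + d)) (P + d), deriv f s ≤ sSup (deriv f '' Icc (-(P + d)) (P + d)) :=
    fun s hs => (hf.continuous_deriv le_rfl).continuousOn.le_sSup_image_Icc hs
  have hMVT := (convex_Icc _ _).norm_image_sub_le_of_norm_deriv_le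
    (fun s _ => (hf.differentiable one_ne_zero).differentiableAt)
    (fun s hs => by rw [Real.norm_eq_abs, abs_of_nonneg (hf' s)]; exact hbound s hs) hp_mem hpw_mem
  rw [Real.norm_eq_abs, Real.norm_eq_abs, add_sub_cancel_left] at hMVT
  exact hMVT.trans (mul_le_mul_of_nonneg_left hw ((hf' p).trans (hbound p hp_mem)))

theorem neg_div_le_of_monotone_of_pos {f : ℝ → ℝ} (hf : Monotone f) {k p w w'' r R : ℝ}
    (hk : 0 < k) (heq : -k * w'' + f (p + w) - f p = r) (hr : |r| ≤ R) (hw : 0 < w) :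
    -(R / k) ≤ w'' := by
  have : f p ≤ f (p + w) := hf (le_add_of_nonneg_right hw.le)
  rw [← neg_div, div_le_iff₀ hk]
  linarith [abs_le.1 hr]

theorem le_div_of_monotone_of_neg {f : ℝ → ℝ} (hf : Monotone f) {k p w w'' r R : ℝ}
    (hk : 0 < k) (heq : -k * w'' + f (p + w) - f p = r) (hr : |r| ≤ R) (hw : w < 0) :
    w'' ≤ R / k := by
  have : f (p + w) ≤ f p := hf (add_le_of_nonpos_right hw.le)
  rw [le_div_iff₀ hk]
  linarith [abs_le.1 hr]

section EssSup

variable {α : Type*} [MeasurableSpace α] {μ : Measure α}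

theorem MeasureTheory.MemLp.ae_abs_le_essSup {f : α → ℝ} (hf : MemLp f ⊤ μ) :
    ∀ᵐ x ∂μ, |f x| ≤ essSup (fun x => |f x|) μ := by
  simpa [lpNorm_exponent_top_eq_essSup hf] using ae_le_lpNorm_exponent_top hf

theorem MeasureTheory.MemLp.essSup_abs_nonneg {f : α → ℝ} (hf : MemLp f ⊤ μ) :
    0 ≤ essSup (fun x => |f x|) μ := by
  simpa [lpNorm_exponent_top_eq_essSup hf] using lpNorm_nonneg (f := f) (p := ⊤) (μ := μ)

theorem mul_essSup_abs_le_of_ae [NeZero μ] {g : α → ℝ} {k B : ℝ} (hk : 0 < k)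
    (h : ∀ᵐ x ∂μ, k * |g x| ≤ B) : k * essSup (fun x => |g x|) μ ≤ B := by
  rw [← le_div_iff₀' hk]
  exact essSup_le_of_ae_le _ (h.mono fun x hx => (le_div_iff₀' hk).2 hx)
    (isCoboundedUnder_le_of_le _ fun x => abs_nonneg (g x))

end EssSup

theorem nonlinear_poisson_Linf_estimates_general (lam : ℝ) (hlam : 0 < lam)
    (ne : ℝ → ℝ) (hne : ContDiff ℝ 1 ne) (hne' : ∀ s : ℝ, 0 < deriv ne s)
    (phi : ℝ → ℝ) (hphi : ContinuousOn phi (Icc 0 1))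
    (ρ : ℝ → ℝ)
    (hρ_bdd : MemLp ρ ⊤ (volume.restrict (Ioo (0:ℝ) 1)))
    (W W' W'' : ℝ → ℝ)
    (hW : ∀ x ∈ Icc (0:ℝ) 1, HasDerivWithinAt W (W' x) (Icc 0 1) x)
    (hW''int : IntegrableOn W'' (Icc 0 1))
    (hAC : ∀ x ∈ Icc (0:ℝ) 1, W' x = W' 0 + ∫ t in (0:ℝ)..x, W'' t)
    (hb0 : W 0 = 0) (hb1 : W 1 = 0)
    (heq : ∀ᵐ x ∂(volume.restrict (Ioo (0:ℝ) 1)),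
      -lam ^ 2 * W'' x + ne (phi x + W x) - ne (phi x) = ρ x)
    (R a M : ℝ)
    (hR : R = essSup (fun x => |ρ x|) (volume.restrict (Ioo (0:ℝ) 1)))
    (ha : a = sSup ((fun x => |phi x|) '' Icc (0:ℝ) 1) + 2 / lam ^ 2 * R)
    (hM : M = sSup ((fun s => deriv ne s) '' Icc (-a) a)) :
    (∀ x ∈ Icc (0:ℝ) 1, |ne (phi x + W x) - ne (phi x)| ≤ 2 * M / lam ^ 2 * R) ∧
    lam ^ 2 * essSup (fun x => |W'' x|) (volume.restrict (Ioo (0:ℝ) 1)) ≤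
      (2 * M / lam ^ 2 + 1) * R := by
  have hlam2 : 0 < lam ^ 2 := by positivity
  have hρ : ∀ᵐ x ∂volume.restrict (Ioo (0:ℝ) 1), |ρ x| ≤ R := hR ▸ hρ_bdd.ae_abs_le_essSup
  have hne_mono : Monotone ne := (strictMono_of_deriv_pos hne').monotone
  have hc : 0 ≤ R / lam ^ 2 := div_nonneg (hR ▸ hρ_bdd.essSup_abs_nonneg) hlam2.le
  have hW_abs : ∀ x ∈ Icc (0:ℝ) 1, |W x| ≤ 2 / lam ^ 2 * R := by
    intro x hx
    calc |W x| ≤ R / lam ^ 2 / 2 * ((x - 0) * (1 - x)) :=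
          abs_le_parabola_of_second_deriv_sign hW hW''int hAC hb0 hb1 hc
            (by filter_upwards [heq, hρ] with y hy hyR using
              neg_div_le_of_monotone_of_pos hne_mono hlam2 hy hyR)
            (by filter_upwards [heq, hρ] with y hy hyR using
              le_div_of_monotone_of_neg hne_mono hlam2 hy hyR) x hx
      _ ≤ R / lam ^ 2 / 2 * 1 := by gcongr; nlinarith [hx.1, hx.2]
      _ ≤ 2 / lam ^ 2 * R := by rw [show 2 / lam ^ 2 * R = 2 * (R / lam ^ 2) by ring]; linarith
  have hne_diff : ∀ x ∈ Icc (0:ℝ) 1, |ne (phi x + W x) - ne (phi x)| ≤ 2 * M / lam ^ 2 * R := by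
    intro x hx
    have := abs_sub_le_sSup_deriv_mul_of_abs_le hne (fun s => (hne' s).le)
      (hphi.abs.le_sSup_image_Icc hx) (hW_abs x hx)
    rw [← ha, ← hM] at this
    exact this.trans_eq (by ring)
  have : NeZero (volume (Ioo (0:ℝ) 1)) := ⟨by simp⟩
  refine ⟨hne_diff, mul_essSup_abs_le_of_ae hlam2 ?_⟩
  filter_upwards [heq, hρ, ae_restrict_mem measurableSet_Ioo] with x hx hxR hx01
  calc lam ^ 2 * |W'' x| = |ne (phi x + W x) - ne (phi x) - ρ x| := by
        rw [← abs_of_pos hlam2, ← abs_mul]; congr 1; linarith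
    _ ≤ |ne (phi x + W x) - ne (phi x)| + |ρ x| := abs_sub _ _
    _ ≤ 2 * M / lam ^ 2 * R + R := add_le_add (hne_diff x (Ioo_subset_Icc_self hx01)) hxR
    _ = (2 * M / lam ^ 2 + 1) * R := by ring

/-- `L^∞` estimates for a strong solution `W` of the nonlinear Poisson problem
`-λ² W'' + n_e(φ + W) - n_e(φ) = ρ` on `(0,1)` with homogeneous Dirichlet boundary
conditions, when the source `ρ` is measurable and essentially bounded.
With `R = ‖ρ‖_{L^∞(0,1)}`, `a = sup_{[0,1]} |φ| + (2/λ²) R` and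
`M = sup_{[-a,a]} n_e'`, one has `sup |n_e(φ+W) - n_e(φ)| ≤ (2M/λ²) R` and
`λ² esssup |W''| ≤ (2M/λ² + 1) R`. -/
theorem nonlinear_poisson_Linf_estimates (lam : ℝ) (hlam : 0 < lam)
    (ne : ℝ → ℝ) (hne : ContDiff ℝ 1 ne) (hne' : ∀ s : ℝ, 0 < deriv ne s)
    (phi : ℝ → ℝ) (hphi : ContinuousOn phi (Icc 0 1))
    (ρ : ℝ → ℝ) (hρ_meas : Measurable ρ)
    (hρ_bdd : MemLp ρ ⊤ (volume.restrict (Ioo (0:ℝ) 1)))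
    (W W' W'' : ℝ → ℝ)
    (hW : ∀ x ∈ Icc (0:ℝ) 1, HasDerivWithinAt W (W' x) (Icc 0 1) x)
    (hW'cont : ContinuousOn W' (Icc 0 1))
    (hW''int : IntegrableOn W'' (Icc 0 1))
    (hAC : ∀ x ∈ Icc (0:ℝ) 1, W' x = W' 0 + ∫ t in (0:ℝ)..x, W'' t)
    (hb0 : W 0 = 0) (hb1 : W 1 = 0)
    (heq : ∀ᵐ x ∂(volume.restrict (Ioo (0:ℝ) 1)),
      -lam ^ 2 * W'' x + ne (phi x + W x) - ne (phi x) = ρ x)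
    (R a M : ℝ)
    (hR : R = essSup (fun x => |ρ x|) (volume.restrict (Ioo (0:ℝ) 1)))
    (ha : a = sSup ((fun x => |phi x|) '' Icc (0:ℝ) 1) + 2 / lam ^ 2 * R)
    (hM : M = sSup ((fun s => deriv ne s) '' Icc (-a) a)) :
    (∀ x ∈ Icc (0:ℝ) 1, |ne (phi x + W x) - ne (phi x)| ≤ 2 * M / lam ^ 2 * R) ∧
    lam ^ 2 * essSup (fun x => |W'' x|) (volume.restrict (Ioo (0:ℝ) 1)) ≤
      (2 * M / lam ^ 2 + 1) * R :=
  nonlinear_poisson_Linf_estimates_general lam hlam ne hne hne' phi hphi ρ hρ_bdd W W' W'' hW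
    hW''int hAC hb0 hb1 heq R a M hR ha hM
end

section
/- Let φ : ℝ → ℝ be continuously differentiable and suppose there are constants 0 < c₁ ≤ c₂ with c₁ ≤ −φ'(x) ≤ c₂ for all x ∈ (0,1). Let (X,V) : ℝ → ℝ² be a solution of the ODE system X'(s) = V(s), V'(s) = −φ'(X(s)), and let t ∈ ℝ. Then there exists s₁ < t with X(s₁) ∉ (0,1) and there exists s₂ > t with X(s₂) ∉ (0,1); in particular, the incoming time inf{s ≤ t : X(s') ∈ (0,1) for all s' ∈ (s,t)} is finite and the outgoing time sup{s ≥ t : X(s') ∈ (0,1) for all s' ∈ (t,s)} is finite. -/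
/-!
On `(0,1)` the acceleration `-φ'(X)` is at least `c₁ > 0`, so a characteristic staying in `(0,1)`
after time `t` would have a velocity growing at least linearly; once the velocity exceeds the
width of the slab, one further unit of time carries the particle out of it. Reversing time,
`s ↦ (X (-s), -V (-s))` is again a characteristic of the same field, which gives the backward exit.
-/

open Set

theorem HasDerivAt.comp_neg {f : ℝ → ℝ} {f' x : ℝ} (hf : HasDerivAt f f' (-x)) :
    HasDerivAt (fun s => f (-s)) (-f') x := by
  simpa [Function.comp_def] using hf.comp x (hasDerivAt_neg x)

theorem mul_sub_le_sub_of_le_hasDerivAt {f f' : ℝ → ℝ} {t C p q : ℝ}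
    (hf : ∀ s, HasDerivAt f (f' s) s) (hf' : ∀ s > t, C ≤ f' s) (htp : t ≤ p) (hpq : p ≤ q) :
    C * (q - p) ≤ f q - f p := by
  refine (convex_Ici t).mul_sub_le_image_sub_of_le_deriv
    (fun s _ => (hf s).continuousAt.continuousWithinAt)
    (fun s _ => (hf s).differentiableAt.differentiableWithinAt) (fun s hs => ?_)
    p htp q (htp.trans hpq) hpq
  rw [interior_Ici] at hs
  exact (hf s).deriv ▸ hf' s hs

theorem exists_gt_notMem_Ioo_of_le_accel {X V A : ℝ → ℝ} {a b c : ℝ} (hc : 0 < c)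
    (hX : ∀ s, HasDerivAt X (V s) s) (hV : ∀ s, HasDerivAt V (A s) s)
    (hA : ∀ s, X s ∈ Ioo a b → c ≤ A s) (t : ℝ) :
    ∃ s > t, X s ∉ Ioo a b := by
  by_contra! hstay
  have hab : 0 < b - a := by
    obtain ⟨ha, hb⟩ := hstay (t + 1) (by linarith)
    linarith
  set T := t + (|V t| + (b - a)) / c
  have htT : t < T := lt_add_of_pos_right t (by positivity)
  have hV_ge : ∀ s > T, b - a ≤ V s := fun s hs => by
    have hgrow := mul_sub_le_sub_of_le_hasDerivAt hV (fun s hs => hA s (hstay s hs))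
      le_rfl (htT.trans hs).le
    have hcT : c * (T - t) = |V t| + (b - a) := by
      simp only [T, add_sub_cancel_left]; field_simp
    calc b - a ≤ V t + c * (T - t) := by rw [hcT]; linarith [neg_abs_le (V t)]
      _ ≤ V t + c * (s - t) := by gcongr
      _ ≤ V s := by linarith
  have hdist := mul_sub_le_sub_of_le_hasDerivAt hX hV_ge le_rfl (le_add_of_nonneg_right zero_le_one)
  have hT := hstay T htT
  have hT1 := hstay (T + 1) (by linarith)
  simp only [mem_Ioo] at hT hT1
  linarith

theorem exit_times_finite_general (phi : ℝ → ℝ)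
    (c₁ c₂ : ℝ) (hc₁ : 0 < c₁)
    (hfield : ∀ x ∈ Ioo (0:ℝ) 1, c₁ ≤ -deriv phi x ∧ -deriv phi x ≤ c₂)
    (X V : ℝ → ℝ)
    (hX : ∀ s, HasDerivAt X (V s) s)
    (hV : ∀ s, HasDerivAt V (-deriv phi (X s)) s)
    (t : ℝ) :
    (∃ s₁ < t, X s₁ ∉ Ioo (0:ℝ) 1) ∧ (∃ s₂ > t, X s₂ ∉ Ioo (0:ℝ) 1) ∧
    BddBelow {s : ℝ | s ≤ t ∧ ∀ s' ∈ Ioo s t, X s' ∈ Ioo (0:ℝ) 1} ∧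
    BddAbove {s : ℝ | t ≤ s ∧ ∀ s' ∈ Ioo t s, X s' ∈ Ioo (0:ℝ) 1} := by
  have haccel : ∀ s, X s ∈ Ioo 0 1 → c₁ ≤ -deriv phi (X s) := fun s hs => (hfield _ hs).1
  obtain ⟨s₂, hts₂, hs₂⟩ := exists_gt_notMem_Ioo_of_le_accel hc₁ hX hV haccel t
  obtain ⟨r, htr, hr⟩ := exists_gt_notMem_Ioo_of_le_accel hc₁
    (fun s => (hX (-s)).comp_neg) (fun s => by simpa using (hV (-s)).comp_neg.fun_neg)
    (fun s => haccel (-s)) (-t)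
  have hs₁t : -r < t := by linarith
  refine ⟨⟨-r, hs₁t, hr⟩, ⟨s₂, hts₂, hs₂⟩, ⟨-r, ?_⟩, ⟨s₂, ?_⟩⟩
  · exact fun s ⟨_, hin⟩ => le_of_not_gt fun hlt => hr (hin (-r) ⟨hlt, hs₁t⟩)
  · exact fun s ⟨_, hin⟩ => le_of_not_gt fun hlt => hs₂ (hin s₂ ⟨hts₂, hlt⟩)

/-- Finiteness of the exit times: if the electric field `-φ'` is uniformly positive on `(0,1)`,
then any characteristic `X' = V`, `V' = -φ'(X)` leaves the slab `(0,1)` both backward and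
forward in time; in particular the incoming time `inf {s ≤ t : X(s') ∈ (0,1) ∀ s' ∈ (s,t)}`
and the outgoing time `sup {s ≥ t : X(s') ∈ (0,1) ∀ s' ∈ (t,s)}` are finite. -/
theorem exit_times_finite (phi : ℝ → ℝ) (hphi : ContDiff ℝ 1 phi)
    (c₁ c₂ : ℝ) (hc₁ : 0 < c₁) (hc₁₂ : c₁ ≤ c₂)
    (hfield : ∀ x ∈ Ioo (0:ℝ) 1, c₁ ≤ -deriv phi x ∧ -deriv phi x ≤ c₂)
    (X V : ℝ → ℝ)
    (hX : ∀ s, HasDerivAt X (V s) s)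
    (hV : ∀ s, HasDerivAt V (-deriv phi (X s)) s)
    (t : ℝ) :
    (∃ s₁ < t, X s₁ ∉ Ioo (0:ℝ) 1) ∧ (∃ s₂ > t, X s₂ ∉ Ioo (0:ℝ) 1) ∧
    BddBelow {s : ℝ | s ≤ t ∧ ∀ s' ∈ Ioo s t, X s' ∈ Ioo (0:ℝ) 1} ∧
    BddAbove {s : ℝ | t ≤ s ∧ ∀ s' ∈ Ioo t s, X s' ∈ Ioo (0:ℝ) 1} :=
  exit_times_finite_general phi c₁ c₂ hc₁ hfield X V hX hV t
end

section
/- Let φ : ℝ → ℝ be continuously differentiable with φ(x) ≤ 0 for every x ∈ [0,1], and let r ≥ 0. Let (X,V) be a solution of X'(s) = V(s), V'(s) = −φ'(X(s)) on an interval J, with X(s) ∈ (0,1) for all s ∈ J, and suppose that for some t₀ ∈ J one has V(t₀) > √(r² − 2φ(X(t₀))). Then for every s ∈ J one has V(s) > √(r² − 2φ(X(s))). -/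
open Set

/-!
Along a characteristic the microscopic energy `V²/2 + φ(X)` is conserved, so it stays above
`r²/2` once it is there. Since `φ ≤ 0`, this forces `V ≠ 0` on `J`, and by connectedness `V`
keeps the sign it has at `t₀`.
-/

noncomputable def energy (φ : ℝ → ℝ) (x v : ℝ) : ℝ := v ^ 2 / 2 + φ x

theorem Set.OrdConnected.eq_of_hasDerivWithinAt_zero {E : Type*} [NormedAddCommGroup E]
    [NormedSpace ℝ E] {J : Set ℝ} (hJ : J.OrdConnected) {f : ℝ → E}
    (hf : ∀ t ∈ J, HasDerivWithinAt f 0 J t) {a b : ℝ} (ha : a ∈ J) (hb : b ∈ J) :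
    f a = f b := by
  have h := hJ.convex.norm_image_sub_le_of_norm_hasDerivWithin_le hf
    (fun _ _ => norm_zero.le) hb ha
  rwa [zero_mul, norm_le_zero_iff, sub_eq_zero] at h

theorem IsPreconnected.pos_of_ne_zero {X α : Type*} [TopologicalSpace X] [LinearOrder α]
    [TopologicalSpace α] [OrderClosedTopology α] [Zero α] {s : Set X} (hs : IsPreconnected s)
    {f : X → α} (hf : ContinuousOn f s) (hne : ∀ x ∈ s, f x ≠ 0) {a : X} (ha : a ∈ s)
    (hfa : 0 < f a) : ∀ x ∈ s, 0 < f x := by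
  intro x hx
  by_contra! hfx
  obtain ⟨c, hc, hfc⟩ := hs.intermediate_value hx ha hf ⟨hfx, hfa.le⟩
  exact hne c hc hfc

theorem hasDerivWithinAt_energy {φ X V : ℝ → ℝ} {J : Set ℝ} {t : ℝ}
    (hφ : DifferentiableAt ℝ φ (X t)) (hX : HasDerivWithinAt X (V t) J t)
    (hV : HasDerivWithinAt V (-deriv φ (X t)) J t) :
    HasDerivWithinAt (fun s => energy φ (X s) (V s)) 0 J t := by
  unfold energy
  refine (((hV.fun_pow 2).div_const 2).fun_add
    (hφ.hasDerivAt.comp_hasDerivWithinAt t hX)).congr_deriv ?_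
  push_cast
  ring

theorem sqrt_lt_iff_pos_and_lt_energy {φ : ℝ → ℝ} {r x v : ℝ} :
    √(r ^ 2 - 2 * φ x) < v ↔ 0 < v ∧ r ^ 2 / 2 < energy φ x v := by
  unfold energy
  constructor
  · intro h
    have hv : 0 < v := (Real.sqrt_nonneg _).trans_lt h
    exact ⟨hv, by linarith [(Real.sqrt_lt' hv).1 h]⟩
  · rintro ⟨hv, h⟩
    exact (Real.sqrt_lt' hv).2 (by linarith)

theorem Dr_invariant_general (phi : ℝ → ℝ) (hphi : ContDiff ℝ 1 phi)
    (hneg : ∀ x ∈ Icc (0:ℝ) 1, phi x ≤ 0)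
    (r : ℝ)
    (J : Set ℝ) (hJ : J.OrdConnected)
    (X V : ℝ → ℝ)
    (hX : ∀ s ∈ J, HasDerivWithinAt X (V s) J s)
    (hV : ∀ s ∈ J, HasDerivWithinAt V (-deriv phi (X s)) J s)
    (hin : ∀ s ∈ J, X s ∈ Ioo (0:ℝ) 1)
    (t₀ : ℝ) (ht₀ : t₀ ∈ J)
    (hv₀ : V t₀ > Real.sqrt (r ^ 2 - 2 * phi (X t₀))) :
    ∀ s ∈ J, V s > Real.sqrt (r ^ 2 - 2 * phi (X s)) := by
  have hconst : ∀ s ∈ J, energy phi (X s) (V s) = energy phi (X t₀) (V t₀) := fun s hs =>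
    hJ.eq_of_hasDerivWithinAt_zero (fun t ht => hasDerivWithinAt_energy
      ((hphi.differentiable one_ne_zero) (X t)) (hX t ht) (hV t ht)) hs ht₀
  obtain ⟨hV₀, hE₀⟩ := sqrt_lt_iff_pos_and_lt_energy.1 hv₀
  have hVne : ∀ s ∈ J, V s ≠ 0 := by
    intro s hs hVs
    have hφ := hneg (X s) (Ioo_subset_Icc_self (hin s hs))
    have hE := hconst s hs
    simp only [energy, hVs] at hE hE₀
    nlinarith
  have hVpos := hJ.isPreconnected.pos_of_ne_zero (fun s hs => (hV s hs).continuousWithinAt)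
    hVne ht₀ hV₀
  exact fun s hs => sqrt_lt_iff_pos_and_lt_energy.2 ⟨hVpos s hs, hconst s hs ▸ hE₀⟩

/-- Invariance of the region `D⁺_r = {(x,v) : v > √(r² - 2φ(x))}` under the characteristic
flow `X' = V`, `V' = -φ'(X)`, for a nonpositive potential `φ` on `[0,1]`:
if the characteristic stays in the slab on an interval `J` and lies in `D⁺_r`
at some time `t₀ ∈ J`, then it lies in `D⁺_r` at every time of `J`. -/
theorem Dr_invariant (phi : ℝ → ℝ) (hphi : ContDiff ℝ 1 phi)
    (hneg : ∀ x ∈ Icc (0:ℝ) 1, phi x ≤ 0)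
    (r : ℝ) (hr : 0 ≤ r)
    (J : Set ℝ) (hJ : J.OrdConnected)
    (X V : ℝ → ℝ)
    (hX : ∀ s ∈ J, HasDerivWithinAt X (V s) J s)
    (hV : ∀ s ∈ J, HasDerivWithinAt V (-deriv phi (X s)) J s)
    (hin : ∀ s ∈ J, X s ∈ Ioo (0:ℝ) 1)
    (t₀ : ℝ) (ht₀ : t₀ ∈ J)
    (hv₀ : V t₀ > Real.sqrt (r ^ 2 - 2 * phi (X t₀))) :
    ∀ s ∈ J, V s > Real.sqrt (r ^ 2 - 2 * phi (X s)) :=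
  Dr_invariant_general phi hphi hneg r J hJ X V hX hV hin t₀ ht₀ hv₀
end

section
/- Let φ : ℝ → ℝ be continuously differentiable, nonincreasing on [0,1], with φ(x) ≤ 0 for all x ∈ [0,1]. Let x ∈ (0,1) and v > √(−2φ(x)), and let (X,V) be the solution of X'(s) = V(s), V'(s) = −φ'(X(s)) with X(0) = x, V(0) = v. Set τ = ∫ₓ¹ du / √(v² + 2(φ(x) − φ(u))). Then X(τ) = 1 and X(s) ∈ (0,1) for every s ∈ [0,τ). -/
open Set

/-!
Along the characteristic the energy `V² + 2φ(X)` is conserved, equal to `c² := v² + 2φ(x) > 0`.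
As `φ ≤ 0` on `[0,1]`, `|V| ≥ c` while `X` stays in `[0,1]`, so `V`, which starts at `v ≥ c`,
cannot change sign there: `V ≥ c`. Hence `X` leaves `(0,1)`, through `1`, at some time
`T ≤ (1 - x)/c`; on `[0,T]` the velocity is `V = √(v² + 2(φ(x) - φ(X)))`, so the substitution
`u = X(s)` turns the integral defining `τ` into `∫₀ᵀ ds = T`.
-/

theorem energy_conserved {phi X V : ℝ → ℝ} (hphi : Differentiable ℝ phi)
    (hX : ∀ s, HasDerivAt X (V s) s) (hV : ∀ s, HasDerivAt V (-deriv phi (X s)) s) (s t : ℝ) :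
    V s ^ 2 + 2 * phi (X s) = V t ^ 2 + 2 * phi (X t) := by
  have hE : ∀ s, HasDerivAt (fun s => V s ^ 2 + 2 * phi (X s)) 0 s := by
    intro s
    have hsum : HasDerivAt (fun s => V s ^ 2 + 2 * phi (X s))
        ((2 : ℕ) * V s ^ (2 - 1) * -deriv phi (X s) + 2 * (deriv phi (X s) * V s)) s :=
      ((hV s).pow 2).add (((hphi (X s)).hasDerivAt.comp s (hX s)).const_mul 2)
    convert hsum using 1
    push_cast
    ring
  exact is_const_of_deriv_eq_zero (fun s => (hE s).differentiableAt) (fun s => (hE s).deriv) s t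

theorem le_of_forall_sq_le_sq_of_continuousOn {f : ℝ → ℝ} {a b c : ℝ}
    (hf : ContinuousOn f (Icc a b)) (hab : a ≤ b) (hc : 0 < c) (ha : c ≤ f a)
    (hsq : ∀ t ∈ Icc a b, c ^ 2 ≤ f t ^ 2) : c ≤ f b := by
  by_contra! hb
  have hb_neg : f b ≤ 0 := by nlinarith [hsq b ⟨hab, le_rfl⟩]
  obtain ⟨r, hr, hfr⟩ : (0 : ℝ) ∈ f '' Icc a b :=
    intermediate_value_Icc' hab hf ⟨hb_neg, hc.le.trans ha⟩
  nlinarith [hsq r hr]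

theorem exists_first_exit {α : Type*} [TopologicalSpace α] {f : ℝ → α} {U : Set α} {a b : ℝ}
    (hf : ContinuousOn f (Icc a b)) (hU : IsOpen U) (hexit : ∃ t ∈ Icc a b, f t ∉ U) :
    ∃ T ∈ Icc a b, f T ∉ U ∧ ∀ s ∈ Ico a T, f s ∈ U := by
  set E := Icc a b ∩ f ⁻¹' Uᶜ
  have hE : IsClosed E := hf.preimage_isClosed_of_isClosed isClosed_Icc hU.isClosed_compl
  have hEne : E.Nonempty := hexit
  have hEbdd : BddBelow E := ⟨a, fun t ht => ht.1.1⟩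
  obtain ⟨hT, hTU⟩ := hE.csInf_mem hEne hEbdd
  refine ⟨sInf E, hT, hTU, fun s hs => ?_⟩
  by_contra hsU
  exact (csInf_le hEbdd ⟨⟨hs.1, hs.2.le.trans hT.2⟩, hsU⟩).not_gt hs.2

theorem mul_sub_le_sub_of_le_hasDerivAt_s11 {X V : ℝ → ℝ} {a b c : ℝ} (hab : a ≤ b)
    (hX : ∀ s, HasDerivAt X (V s) s) (hV : ∀ s ∈ Ico a b, c ≤ V s) :
    c * (b - a) ≤ X b - X a := by
  have hXd : Differentiable ℝ X := fun s => (hX s).differentiableAt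
  refine (convex_Icc a b).mul_sub_le_image_sub_of_le_deriv hXd.continuous.continuousOn
    hXd.differentiableOn (fun s hs => ?_) a ⟨le_rfl, hab⟩ b ⟨hab, le_rfl⟩ hab
  rw [interior_Icc] at hs
  exact (hX s).deriv ▸ hV s ⟨hs.1.le, hs.2⟩

theorem integral_one_div_comp_eq_sub {X V g : ℝ → ℝ} {a b : ℝ} (hab : a ≤ b)
    (hX : ∀ s ∈ Icc a b, HasDerivAt X (V s) s) (hV : ContinuousOn V (Icc a b))
    (hg : ContinuousOn g (X '' Icc a b)) (hVg : ∀ s ∈ Icc a b, V s = g (X s))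
    (hV0 : ∀ s ∈ Icc a b, V s ≠ 0) :
    ∫ u in X a..X b, 1 / g u = b - a := by
  have hg' : ContinuousOn (fun u => 1 / g u) (X '' uIcc a b) := by
    rw [uIcc_of_le hab]
    refine continuousOn_const.div hg ?_
    rintro _ ⟨s, hs, rfl⟩
    exact hVg s hs ▸ hV0 s hs
  rw [← intervalIntegral.integral_comp_mul_deriv' (by rwa [uIcc_of_le hab])
    (by rwa [uIcc_of_le hab]) hg']
  rw [intervalIntegral.integral_congr (g := fun _ => (1 : ℝ)), intervalIntegral.integral_const,
    smul_eq_mul, mul_one]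
  intro s hs
  rw [uIcc_of_le hab] at hs
  simp only [Function.comp_apply, ← hVg s hs]
  exact one_div_mul_cancel (hV0 s hs)

section Trajectory

variable {X V : ℝ → ℝ} {c : ℝ}

theorem exists_exit_Ioo_zero_one (hX : ∀ s, HasDerivAt X (V s) s) (hVc : Continuous V)
    (hsq : ∀ s, X s ∈ Icc 0 1 → c ^ 2 ≤ V s ^ 2) (hc : 0 < c) (hV0 : c ≤ V 0)
    (hx : X 0 ∈ Ioo 0 1) : ∃ t ∈ Icc 0 ((1 - X 0) / c), X t ∉ Ioo 0 1 := by
  set L := (1 - X 0) / c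
  have hL : 0 ≤ L := div_nonneg (by linarith [hx.2]) hc.le
  by_contra! hinside
  have hVL : ∀ s ∈ Ico 0 L, c ≤ V s := fun s hs =>
    le_of_forall_sq_le_sq_of_continuousOn hVc.continuousOn hs.1 hc hV0
      fun r hr => hsq r (Ioo_subset_Icc_self (hinside r ⟨hr.1, hr.2.trans hs.2.le⟩))
  have hcL : c * (L - 0) = 1 - X 0 := by simp only [sub_zero, L]; field_simp
  have := mul_sub_le_sub_of_le_hasDerivAt_s11 hL hX hVL
  linarith [(hinside L ⟨hL, le_rfl⟩).2]

theorem exists_hitting_time_one (hX : ∀ s, HasDerivAt X (V s) s) (hVc : Continuous V)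
    (hsq : ∀ s, X s ∈ Icc 0 1 → c ^ 2 ≤ V s ^ 2) (hc : 0 < c) (hV0 : c ≤ V 0)
    (hx : X 0 ∈ Ioo 0 1) :
    ∃ T, 0 ≤ T ∧ X T = 1 ∧ (∀ s ∈ Ico 0 T, X s ∈ Ioo 0 1) ∧ ∀ s ∈ Icc 0 T, c ≤ V s := by
  have hXc : Continuous X := continuous_iff_continuousAt.2 fun s => (hX s).continuousAt
  obtain ⟨T, hT, hexit, hinside⟩ := exists_first_exit hXc.continuousOn isOpen_Ioo
    (exists_exit_Ioo_zero_one hX hVc hsq hc hV0 hx)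
  have hV_of_mapsTo : ∀ t, 0 ≤ t → MapsTo X (Icc 0 t) (Icc 0 1) → c ≤ V t := fun t ht h =>
    le_of_forall_sq_le_sq_of_continuousOn hVc.continuousOn ht hc hV0 fun r hr => hsq r (h hr)
  have hVT : ∀ s ∈ Ico 0 T, c ≤ V s := fun s hs => hV_of_mapsTo s hs.1 fun r hr =>
    Ioo_subset_Icc_self (hinside r ⟨hr.1, hr.2.trans_lt hs.2⟩)
  have hXT : 1 ≤ X T := by
    have := mul_sub_le_sub_of_le_hasDerivAt_s11 hT.1 hX hVT
    by_contra! h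
    exact hexit ⟨by nlinarith [hx.1, hT.1], h⟩
  obtain ⟨r, hr, hXr⟩ : (1 : ℝ) ∈ X '' Icc 0 T :=
    intermediate_value_Icc hT.1 hXc.continuousOn ⟨hx.2.le, hXT⟩
  have hrT : r = T := by
    by_contra h
    exact (hinside r ⟨hr.1, lt_of_le_of_ne hr.2 h⟩).2.ne hXr
  subst hrT
  refine ⟨r, hT.1, hXr, hinside, fun s hs => hV_of_mapsTo s hs.1 fun t ht => ?_⟩
  rcases (ht.2.trans hs.2).lt_or_eq with htr | rfl
  · exact Ioo_subset_Icc_self (hinside t ⟨ht.1, htr⟩)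
  · rw [hXr]
    exact ⟨zero_le_one, le_rfl⟩

end Trajectory

theorem outgoing_time_formula_general (phi : ℝ → ℝ) (hphi : ContDiff ℝ 1 phi)
    (hneg : ∀ x ∈ Icc (0:ℝ) 1, phi x ≤ 0)
    (x v : ℝ) (hx : x ∈ Ioo (0:ℝ) 1) (hv : v > Real.sqrt (-2 * phi x))
    (X V : ℝ → ℝ)
    (hX : ∀ s, HasDerivAt X (V s) s)
    (hV : ∀ s, HasDerivAt V (-deriv phi (X s)) s)
    (hX0 : X 0 = x) (hV0 : V 0 = v)
    (τ : ℝ) (hτ : τ = ∫ u in x..1, 1 / Real.sqrt (v ^ 2 + 2 * (phi x - phi u))) :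
    X τ = 1 ∧ ∀ s ∈ Ico (0:ℝ) τ, X s ∈ Ioo (0:ℝ) 1 := by
  have hv0 : 0 < v := (Real.sqrt_nonneg _).trans_lt hv
  have he : 0 < v ^ 2 + 2 * phi x := by linarith [(Real.sqrt_lt' hv0).mp hv]
  set c := Real.sqrt (v ^ 2 + 2 * phi x)
  have hc : 0 < c := Real.sqrt_pos.2 he
  have hE : ∀ s, V s ^ 2 + 2 * phi (X s) = c ^ 2 := fun s => by
    rw [Real.sq_sqrt he.le, energy_conserved (hphi.differentiable one_ne_zero) hX hV s 0, hX0,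
      hV0]
  have hsq : ∀ s, X s ∈ Icc 0 1 → c ^ 2 ≤ V s ^ 2 := fun s hs => by linarith [hE s, hneg _ hs]
  have hcv : c ≤ V 0 := by
    rw [hV0, ← Real.sqrt_sq hv0.le]
    exact Real.sqrt_le_sqrt (by linarith [hneg x (Ioo_subset_Icc_self hx)])
  have hVc : Continuous V := continuous_iff_continuousAt.2 fun s => (hV s).continuousAt
  obtain ⟨T, hT0, hXT, hinside, hVT⟩ := exists_hitting_time_one hX hVc hsq hc hcv (hX0 ▸ hx)
  have hVg : ∀ s ∈ Icc 0 T, V s = Real.sqrt (v ^ 2 + 2 * (phi x - phi (X s))) := fun s hs => by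
    rw [show v ^ 2 + 2 * (phi x - phi (X s)) = V s ^ 2 by linarith [hE s, Real.sq_sqrt he.le],
      Real.sqrt_sq (hc.le.trans (hVT s hs))]
  have hg : ContinuousOn (fun u => Real.sqrt (v ^ 2 + 2 * (phi x - phi u))) (X '' Icc 0 T) := by
    have := hphi.continuous
    fun_prop
  have hτT : τ = T := by
    have := integral_one_div_comp_eq_sub hT0 (fun s _ => hX s) hVc.continuousOn hg hVg
      fun s hs => (hc.trans_le (hVT s hs)).ne'
    rw [hX0, hXT, sub_zero] at this
    exact hτ.trans this
  exact hτT ▸ ⟨hXT, hinside⟩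

/-- Explicit formula for the outgoing time of a characteristic in `D⁺`: for a nonpositive
nonincreasing potential `φ` and a starting point `(x,v)` with `v > √(-2φ(x))`,
the characteristic through `(x,v)` at time `0` reaches `x = 1` exactly at time
`τ = ∫_x^1 du / √(v² + 2(φ(x) - φ(u)))`, staying in the slab `(0,1)` before `τ`. -/
theorem outgoing_time_formula (phi : ℝ → ℝ) (hphi : ContDiff ℝ 1 phi)
    (hmono : AntitoneOn phi (Icc 0 1))
    (hneg : ∀ x ∈ Icc (0:ℝ) 1, phi x ≤ 0)
    (x v : ℝ) (hx : x ∈ Ioo (0:ℝ) 1) (hv : v > Real.sqrt (-2 * phi x))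
    (X V : ℝ → ℝ)
    (hX : ∀ s, HasDerivAt X (V s) s)
    (hV : ∀ s, HasDerivAt V (-deriv phi (X s)) s)
    (hX0 : X 0 = x) (hV0 : V 0 = v)
    (τ : ℝ) (hτ : τ = ∫ u in x..1, 1 / Real.sqrt (v ^ 2 + 2 * (phi x - phi u))) :
    X τ = 1 ∧ ∀ s ∈ Ico (0:ℝ) τ, X s ∈ Ioo (0:ℝ) 1 :=
  outgoing_time_formula_general phi hphi hneg x v hx hv X V hX hV hX0 hV0 τ hτ
end

section
/- Let φ : [0,1] → ℝ be continuously differentiable, concave, with φ(0) = 0, φ'(u) < 0 for all u ∈ [0,1]. Then for every x ∈ (0,1], ∫₀ˣ du / √(−2φ(u)) ≤ √(−2φ(x)) / |φ'(0)|. -/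
/-!
Concavity puts `φ` below its tangent line at `0`, so `-2φ(u) ≥ 2|φ'(0)| u` and the integrand is
dominated by `(2|φ'(0)| u)^(-1/2)`. Its integral over `[0, x]` is
`2√x / √(2|φ'(0)|) = √(2|φ'(0)| x) / |φ'(0)| ≤ √(-2φ(x)) / |φ'(0)|`.
-/

open Set MeasureTheory

theorem ConcaveOn.le_add_mul_sub_of_hasDerivWithinAt {S : Set ℝ} {f : ℝ → ℝ} {x y f' : ℝ}
    (hfc : ConcaveOn ℝ S f) (hx : x ∈ S) (hy : y ∈ S) (hxy : x ≤ y)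
    (hf' : HasDerivWithinAt f f' S x) : f y ≤ f x + f' * (y - x) := by
  rcases hxy.eq_or_lt with rfl | hxy
  · simp
  have hslope := hfc.slope_le_of_hasDerivWithinAt hx hy hxy hf'
  rw [slope_def_field, div_le_iff₀ (sub_pos.mpr hxy)] at hslope
  linarith

theorem intervalIntegrable_inv_sqrt {x : ℝ} (hx : 0 ≤ x) :
    IntervalIntegrable (fun u => (√u)⁻¹) volume 0 x := by
  refine (intervalIntegral.intervalIntegrable_rpow' (r := -(1 / 2)) (by norm_num)).congr ?_
  rw [uIoc_of_le hx]
  intro u hu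
  simp only [Real.rpow_neg hu.1.le, ← Real.sqrt_eq_rpow]

theorem integral_inv_sqrt {x : ℝ} (hx : 0 ≤ x) : ∫ u in (0:ℝ)..x, (√u)⁻¹ = 2 * √x := by
  have hcongr : EqOn (fun u => (√u)⁻¹) (fun u => u ^ (-(1 / 2) : ℝ)) (uIcc 0 x) := by
    intro u hu
    rw [uIcc_of_le hx] at hu
    simp only [Real.rpow_neg hu.1, ← Real.sqrt_eq_rpow]
  rw [intervalIntegral.integral_congr hcongr, integral_rpow (Or.inl (by norm_num)),
    Real.zero_rpow (by norm_num), Real.sqrt_eq_rpow]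
  norm_num
  ring

theorem one_div_sqrt_le_of_mul_le {a u y : ℝ} (ha : 0 < a) (hu : 0 < u) (h : a * u ≤ y) :
    1 / √y ≤ (√a)⁻¹ * (√u)⁻¹ := by
  rw [one_div, ← mul_inv, ← Real.sqrt_mul ha.le]
  exact inv_anti₀ (Real.sqrt_pos.mpr (mul_pos ha hu)) (Real.sqrt_le_sqrt h)

theorem intervalIntegrable_one_div_sqrt_of_mul_le {f : ℝ → ℝ} {a x : ℝ} (ha : 0 < a)
    (hx : 0 ≤ x) (hf : ContinuousOn f (Ioc 0 x)) (hle : ∀ u ∈ Ioc 0 x, a * u ≤ f u) :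
    IntervalIntegrable (fun u => 1 / √(f u)) volume 0 x := by
  refine ((intervalIntegrable_inv_sqrt hx).const_mul (√a)⁻¹).mono_fun ?_ ?_ <;>
    rw [uIoc_of_le hx]
  · refine ContinuousOn.aestronglyMeasurable ?_ measurableSet_Ioc
    refine continuousOn_const.div hf.sqrt fun u hu => ?_
    exact (Real.sqrt_pos.mpr ((mul_pos ha hu.1).trans_le (hle u hu))).ne'
  · filter_upwards [ae_restrict_mem measurableSet_Ioc] with u hu
    rw [Real.norm_of_nonneg (by positivity), Real.norm_of_nonneg (by positivity)]
    exact one_div_sqrt_le_of_mul_le ha hu.1 (hle u hu)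

theorem integral_one_div_sqrt_le_of_mul_le {f : ℝ → ℝ} {a x : ℝ} (ha : 0 < a) (hx : 0 < x)
    (hf : ContinuousOn f (Ioc 0 x)) (hle : ∀ u ∈ Ioc 0 x, a * u ≤ f u) :
    ∫ u in (0:ℝ)..x, 1 / √(f u) ≤ 2 * √(f x) / a :=
  calc ∫ u in (0:ℝ)..x, 1 / √(f u)
      ≤ ∫ u in (0:ℝ)..x, (√a)⁻¹ * (√u)⁻¹ :=
        intervalIntegral.integral_mono_on_of_le_Ioo hx.le
          (intervalIntegrable_one_div_sqrt_of_mul_le ha hx.le hf hle)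
          ((intervalIntegrable_inv_sqrt hx.le).const_mul _) fun u hu =>
          one_div_sqrt_le_of_mul_le ha hu.1 (hle u (Ioo_subset_Ioc_self hu))
    _ = 2 * √(a * x) / a := by
        rw [intervalIntegral.integral_const_mul, integral_inv_sqrt hx.le, Real.sqrt_mul ha.le]
        field_simp
        rw [Real.sq_sqrt ha.le]
    _ ≤ 2 * √(f x) / a := by
        gcongr
        exact hle x ⟨hx, le_rfl⟩

theorem flight_time_bound_general (phi phi' : ℝ → ℝ)
    (hderiv : ∀ u ∈ Icc (0:ℝ) 1, HasDerivWithinAt phi (phi' u) (Icc 0 1) u)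
    (hconc : ConcaveOn ℝ (Icc 0 1) phi)
    (h0 : phi 0 = 0)
    (hneg : ∀ u ∈ Icc (0:ℝ) 1, phi' u < 0) :
    ∀ x ∈ Ioc (0:ℝ) 1,
      IntervalIntegrable (fun u => 1 / Real.sqrt (-2 * phi u)) MeasureTheory.volume 0 x ∧
      ∫ u in (0:ℝ)..x, 1 / Real.sqrt (-2 * phi u) ≤ Real.sqrt (-2 * phi x) / |phi' 0| := by
  intro x hx
  have h0mem : (0:ℝ) ∈ Icc 0 1 := left_mem_Icc.mpr zero_le_one
  have hpos : 0 < -2 * phi' 0 := by linarith [hneg 0 h0mem]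
  have hsub : Ioc 0 x ⊆ Icc 0 1 := fun u hu => ⟨hu.1.le, hu.2.trans hx.2⟩
  have hcont : ContinuousOn (fun u => -2 * phi u) (Ioc 0 x) :=
    (continuousOn_const.mul fun u hu => (hderiv u hu).continuousWithinAt).mono hsub
  have htangent : ∀ u ∈ Ioc 0 x, -2 * phi' 0 * u ≤ -2 * phi u := fun u hu => by
    have := hconc.le_add_mul_sub_of_hasDerivWithinAt h0mem (hsub hu) hu.1.le (hderiv 0 h0mem)
    rw [h0] at this
    linarith
  refine ⟨intervalIntegrable_one_div_sqrt_of_mul_le hpos hx.1.le hcont htangent, ?_⟩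
  calc ∫ u in (0:ℝ)..x, 1 / √(-2 * phi u)
      ≤ 2 * √(-2 * phi x) / (-2 * phi' 0) :=
        integral_one_div_sqrt_le_of_mul_le hpos hx.1 hcont htangent
    _ = √(-2 * phi x) / |phi' 0| := by
        rw [abs_of_neg (hneg 0 h0mem)]
        field_simp

/-- Bound on the time of flight in `D⁺`: for a decreasing concave `C¹` potential `φ`
on `[0,1]` with `φ(0) = 0`, for every `x ∈ (0,1]` the (convergent) improper integral
`∫₀ˣ du / √(-2φ(u))` is bounded by `√(-2φ(x)) / |φ'(0)|`. -/
theorem flight_time_bound (phi phi' : ℝ → ℝ)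
    (hderiv : ∀ u ∈ Icc (0:ℝ) 1, HasDerivWithinAt phi (phi' u) (Icc 0 1) u)
    (hcont : ContinuousOn phi' (Icc 0 1))
    (hconc : ConcaveOn ℝ (Icc 0 1) phi)
    (h0 : phi 0 = 0)
    (hneg : ∀ u ∈ Icc (0:ℝ) 1, phi' u < 0) :
    ∀ x ∈ Ioc (0:ℝ) 1,
      IntervalIntegrable (fun u => 1 / Real.sqrt (-2 * phi u)) MeasureTheory.volume 0 x ∧
      ∫ u in (0:ℝ)..x, 1 / Real.sqrt (-2 * phi u) ≤ Real.sqrt (-2 * phi x) / |phi' 0| :=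
  flight_time_bound_general phi phi' hderiv hconc h0 hneg
end

section
/- Let φ : ℝ → ℝ be continuously differentiable and strictly decreasing on [0,1]. Let (X,V) be a solution of X'(s) = V(s), V'(s) = −φ'(X(s)) on an interval [a,b] with X(s) ∈ [0,1] for all s ∈ [a,b]. If there exists σ ∈ [a,b] with X(σ) = 1 and V(σ) = 0, then for every t ∈ [a,b], X(t) ∉ (0,1). -/
open Set

/-!
The microscopic energy `V² / 2 + φ(X)` is conserved along a characteristic, so at every time
`φ(X t) ≤ V(t)² / 2 + φ(X t) = φ(1)`. As `φ` is strictly decreasing on `[0, 1]`, this forces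
`X t = 1`.
-/

theorem hasDerivWithinAt_energy_zero {phi X V : ℝ → ℝ} {s : Set ℝ} {x : ℝ}
    (hphi : DifferentiableAt ℝ phi (X x)) (hX : HasDerivWithinAt X (V x) s x)
    (hV : HasDerivWithinAt V (-deriv phi (X x)) s x) :
    HasDerivWithinAt (fun t => V t ^ 2 / 2 + phi (X t)) 0 s x := by
  have hkin := (hV.fun_pow 2).div_const 2
  have hpot := hphi.hasDerivAt.comp_hasDerivWithinAt x hX
  refine (hkin.add hpot).congr_deriv ?_
  ring

theorem eq_of_forall_hasDerivWithinAt_Icc_zero {f : ℝ → ℝ} {a b : ℝ}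
    (hf : ∀ x ∈ Icc a b, HasDerivWithinAt f 0 (Icc a b) x) :
    ∀ x ∈ Icc a b, f x = f a :=
  constant_of_has_deriv_right_zero
    (fun x hx => (hf x hx).continuousWithinAt)
    (fun x hx => (hf x (Ico_subset_Icc_self hx)).mono_of_mem_nhdsWithin <|
      Filter.mem_of_superset (Icc_mem_nhdsGE hx.2) (Icc_subset_Icc_left hx.1))

theorem energy_eq_on_Icc {phi X V : ℝ → ℝ} {a b : ℝ} (hphi : Differentiable ℝ phi)
    (hX : ∀ s ∈ Icc a b, HasDerivWithinAt X (V s) (Icc a b) s)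
    (hV : ∀ s ∈ Icc a b, HasDerivWithinAt V (-deriv phi (X s)) (Icc a b) s)
    {s t : ℝ} (hs : s ∈ Icc a b) (ht : t ∈ Icc a b) :
    V s ^ 2 / 2 + phi (X s) = V t ^ 2 / 2 + phi (X t) := by
  have hconst := eq_of_forall_hasDerivWithinAt_Icc_zero
    fun x hx => hasDerivWithinAt_energy_zero (hphi (X x)) (hX x hx) (hV x hx)
  rw [hconst s hs, hconst t ht]

theorem singular_characteristic_general (phi : ℝ → ℝ) (hphi : ContDiff ℝ 1 phi)
    (hanti : StrictAntiOn phi (Icc 0 1))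
    (a b : ℝ)
    (X V : ℝ → ℝ)
    (hX : ∀ s ∈ Icc a b, HasDerivWithinAt X (V s) (Icc a b) s)
    (hV : ∀ s ∈ Icc a b, HasDerivWithinAt V (-deriv phi (X s)) (Icc a b) s)
    (hin : ∀ s ∈ Icc a b, X s ∈ Icc (0:ℝ) 1)
    (σ : ℝ) (hσ : σ ∈ Icc a b) (hXσ : X σ = 1) (hVσ : V σ = 0) :
    ∀ t ∈ Icc a b, X t ∉ Ioo (0:ℝ) 1 := by
  intro t ht hXt
  have henergy := energy_eq_on_Icc (hphi.differentiable one_ne_zero) hX hV ht hσ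
  rw [hXσ, hVσ] at henergy
  have hlt : phi 1 < phi (X t) := hanti (hin t ht) (right_mem_Icc.2 zero_le_one) hXt.2
  nlinarith [sq_nonneg (V t)]

/-- Characterization of the singular set: for `φ` strictly decreasing on `[0,1]`,
a characteristic `X' = V`, `V' = -φ'(X)` staying in `[0,1]` on `[a,b]` and passing
through the boundary phase-space point `(1,0)` never visits an interior spatial point. -/
theorem singular_characteristic (phi : ℝ → ℝ) (hphi : ContDiff ℝ 1 phi)
    (hanti : StrictAntiOn phi (Icc 0 1))
    (a b : ℝ) (hab : a ≤ b)
    (X V : ℝ → ℝ)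
    (hX : ∀ s ∈ Icc a b, HasDerivWithinAt X (V s) (Icc a b) s)
    (hV : ∀ s ∈ Icc a b, HasDerivWithinAt V (-deriv phi (X s)) (Icc a b) s)
    (hin : ∀ s ∈ Icc a b, X s ∈ Icc (0:ℝ) 1)
    (σ : ℝ) (hσ : σ ∈ Icc a b) (hXσ : X σ = 1) (hVσ : V σ = 0) :
    ∀ t ∈ Icc a b, X t ∉ Ioo (0:ℝ) 1 :=
  singular_characteristic_general phi hphi hanti a b X V hX hV hin σ hσ hXσ hVσ
end
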